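/- arXiv:1607.02922 — 8 statements merged into one kernel-verified Lean document; each statement's English description precedes it below -/
import Mathlib

section
/- Let G be a finite simple graph on n vertices. The following are equivalent: (1) there is an assignment of closed real intervals I_v = [a_v, b_v] (with a_v ≤ b_v) to the vertices such that two distinct vertices are adjacent if and only if their intervals intersect, and no interval properly contains another (I_u ⊊ I_v for no pair u ≠ v); (2) there is an enumeration v_1, …, v_n of the vertices such that for every i the set {k : v_k ∈ N[v_i]} is a set of consecutive integers (the closed-neighborhood condition); (3) there is an enumeration v_1, …, v_n of the vertices and an assignment of closed intervals I_{v_i} = [a_i, b_i] with a_1 < a_2 < ⋯ < a_n, b_1 < b_2 < ⋯ < b_n and a_i ≠ b_j for all i, j, such that distinct v_i, v_j are adjacent if and only if [a_i,b_i] ∩ [a_j,b_j] ≠ ∅. -/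
open Set
private lemma dirB {V : Type*} (G : SimpleGraph V) (n : ℕ) (e : Fin n ≃ V)
    (lo hi : Fin n → Fin n)
    (hspec : ∀ i k : Fin n, (e k = e i ∨ G.Adj (e i) (e k)) ↔ (lo i ≤ k ∧ k ≤ hi i)) :
    ∃ e : Fin n ≃ V, ∃ a b : Fin n → ℝ,
      (∀ i, a i ≤ b i) ∧
      StrictMono a ∧ StrictMono b ∧
      (∀ i j : Fin n, a i ≠ b j) ∧
      (∀ i j : Fin n, i ≠ j →
        (G.Adj (e i) (e j) ↔ (Icc (a i) (b i) ∩ Icc (a j) (b j)).Nonempty)) := by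
  have hlohi : ∀ i, lo i ≤ i ∧ i ≤ hi i := fun i => (hspec i i).mp (Or.inl rfl)
  have hsymm : ∀ i k : Fin n, (lo i ≤ k ∧ k ≤ hi i) ↔ (lo k ≤ i ∧ i ≤ hi k) := by
    intro i k
    rw [← hspec i k, ← hspec k i, G.adj_comm, @eq_comm _ (e k)]
  have hhiM : Monotone hi := by
    intro i j hij
    rcases eq_or_lt_of_le hij with rfl | hij; · exact le_refl _
    by_contra hc
    push_neg at hc
    have hk1 : lo i ≤ hi i ∧ hi i ≤ hi i := ⟨(hlohi i).1.trans (hlohi i).2, le_refl _⟩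
    have hk2 : lo (hi i) ≤ i ∧ i ≤ hi (hi i) := (hsymm i (hi i)).mp hk1
    have hjk : j < hi i := lt_of_le_of_lt (hlohi j).2 hc
    have hj2 : lo j ≤ hi i ∧ hi i ≤ hi j :=
      (hsymm (hi i) j).mp ⟨hk2.1.trans hij.le, hjk.le.trans (hlohi (hi i)).2⟩
    exact absurd hj2.2 (not_le.mpr hc)
  have hn1 : (0:ℝ) < (n:ℝ) + 1 := by positivity
  set fr : Fin n → ℝ := fun i => (((i:ℕ):ℝ) + 1) / ((n:ℝ) + 1) with hfr
  have hfr_pos : ∀ i, 0 < fr i := by intro i; positivity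
  have hfr_lt : ∀ i : Fin n, fr i < 1 := by
    intro i
    rw [hfr, div_lt_one hn1]
    have : (i:ℕ) < n := i.2
    have : ((i:ℕ):ℝ) < (n:ℝ) := by exact_mod_cast this
    linarith
  have hfrM : StrictMono fr := by
    intro i j hij
    have : ((i:ℕ):ℝ) < ((j:ℕ):ℝ) := by exact_mod_cast (Fin.lt_iff_val_lt_val.mp hij)
    rw [hfr, div_lt_div_iff₀ hn1 hn1]
    nlinarith
  set a : Fin n → ℝ := fun i => ((i:ℕ):ℝ) with ha
  set b : Fin n → ℝ := fun i => (((hi i : Fin n):ℕ):ℝ) + fr i with hb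
  have hcast : ∀ i j : Fin n, i ≤ j → ((i:ℕ):ℝ) ≤ ((j:ℕ):ℝ) := by
    intro i j hij; exact_mod_cast (Fin.le_iff_val_le_val.mp hij)
  have hab : ∀ i, a i ≤ b i := by
    intro i
    have h1 : ((i:ℕ):ℝ) ≤ (((hi i : Fin n):ℕ):ℝ) := hcast _ _ (hlohi i).2
    have := hfr_pos i
    rw [ha, hb]; dsimp only; linarith
  have haM : StrictMono a := by
    intro i j hij
    have h := Fin.lt_iff_val_lt_val.mp hij
    rw [ha]; dsimp only; exact_mod_cast h
  have hbM : StrictMono b := by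
    intro i j hij
    have h1 := hcast _ _ (hhiM hij.le)
    have h2 := hfrM hij
    rw [hb]; dsimp only; linarith
  have hne : ∀ i j : Fin n, a i ≠ b j := by
    intro i j
    rcases le_or_gt i.1 ((hi j : Fin n) : ℕ) with h | h
    · have : ((i:ℕ):ℝ) ≤ (((hi j : Fin n):ℕ):ℝ) := by exact_mod_cast h
      have := hfr_pos j
      rw [ha, hb]; dsimp only; intro hE; linarith
    · have : (((hi j : Fin n):ℕ):ℝ) + 1 ≤ ((i:ℕ):ℝ) := by exact_mod_cast h
      have := hfr_lt j
      rw [ha, hb]; dsimp only; intro hE; linarith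
  -- key adjacency for i < j
  have key : ∀ i j : Fin n, i < j →
      (G.Adj (e i) (e j) ↔ (Icc (a i) (b i) ∩ Icc (a j) (b j)).Nonempty) := by
    intro i j hij
    have hne' : e j ≠ e i := fun h => hij.ne' (e.injective h)
    have hadj : G.Adj (e i) (e j) ↔ (lo i ≤ j ∧ j ≤ hi i) := by
      rw [← hspec i j, or_iff_right hne']
    rw [Icc_inter_Icc, nonempty_Icc, le_min_iff, max_le_iff, max_le_iff]
    rw [hadj]
    have hloij : lo i ≤ j := ((hlohi i).1.trans hij.le)
    have haibj : a i ≤ b j := by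
      have h1 : ((i:ℕ):ℝ) < ((j:ℕ):ℝ) := by exact_mod_cast hij
      have h2 : ((j:ℕ):ℝ) ≤ (((hi j : Fin n):ℕ):ℝ) := hcast _ _ (hlohi j).2
      have := hfr_pos j
      rw [ha, hb]; dsimp only; linarith
    constructor
    · rintro ⟨_, hjhi⟩
      have h1 : ((j:ℕ):ℝ) ≤ (((hi i : Fin n):ℕ):ℝ) := hcast _ _ hjhi
      have := hfr_pos i
      refine ⟨⟨hab i, ?_⟩, ⟨haibj, hab j⟩⟩
      rw [ha, hb]; dsimp only; linarith
    · rintro ⟨⟨_, hajbi⟩, _⟩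
      refine ⟨hloij, ?_⟩
      rw [ha, hb] at hajbi; dsimp only at hajbi
      have := hfr_lt i
      have h2 : ((j:ℕ):ℝ) < (((hi i : Fin n):ℕ):ℝ) + 1 := by linarith
      have : (j:ℕ) < ((hi i : Fin n):ℕ) + 1 := by exact_mod_cast h2
      exact Fin.le_iff_val_le_val.mpr (Nat.lt_succ_iff.mp this)
  refine ⟨e, a, b, hab, haM, hbM, hne, fun i j hij => ?_⟩
  rcases lt_or_gt_of_ne hij with h | h
  · exact key i j h
  · rw [G.adj_comm, inter_comm]
    exact key j i h

private lemma dirA {V : Type*} [Fintype V] (G : SimpleGraph V) (n : ℕ) (hn : Fintype.card V = n)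
    (a b : V → ℝ) (hab : ∀ v, a v ≤ b v)
    (hadj : ∀ u v : V, u ≠ v →
      (G.Adj u v ↔ (Icc (a u) (b u) ∩ Icc (a v) (b v)).Nonempty))
    (hprop : ∀ u v : V, u ≠ v → ¬ Icc (a u) (b u) ⊂ Icc (a v) (b v)) :
    ∃ e : Fin n ≃ V, ∀ i : Fin n, ∃ lo hi : Fin n,
      ∀ k : Fin n, (e k = e i ∨ G.Adj (e i) (e k)) ↔ (lo ≤ k ∧ k ≤ hi) := by
  have hmono : ∀ u v : V, a u ≤ a v → b u ≤ b v := by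
    intro u v hle
    by_contra hbc
    push_neg at hbc
    have huv : v ≠ u := fun h => by rw [h] at hbc; exact lt_irrefl _ hbc
    refine hprop v u huv ?_
    rw [Set.ssubset_def]
    refine ⟨Icc_subset_Icc hle hbc.le, fun hsub => ?_⟩
    have := hsub ⟨hab u, le_refl _⟩
    exact absurd this.2 (not_le.mpr hbc)
  obtain ⟨e0⟩ : Nonempty (Fin n ≃ V) := ⟨(Fintype.equivFinOfCardEq hn).symm⟩
  set σ := Tuple.sort (a ∘ e0)
  set e : Fin n ≃ V := σ.trans e0 with he
  have haM : Monotone (a ∘ e) := Tuple.monotone_sort (a ∘ e0)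
  have hbM : Monotone (b ∘ e) := fun i j hij => hmono _ _ (haM hij)
  refine ⟨e, fun i => ?_⟩
  set S : Finset (Fin n) :=
    Finset.univ.filter (fun k => a (e k) ≤ b (e i) ∧ a (e i) ≤ b (e k)) with hS
  have hmem : ∀ k, k ∈ S ↔ (a (e k) ≤ b (e i) ∧ a (e i) ≤ b (e k)) := by
    intro k; simp [hS]
  have hiS : i ∈ S := (hmem i).mpr ⟨hab _, hab _⟩
  have hne : S.Nonempty := ⟨i, hiS⟩
  refine ⟨S.min' hne, S.max' hne, fun k => ?_⟩
  have hiff : (e k = e i ∨ G.Adj (e i) (e k)) ↔ k ∈ S := by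
    rcases eq_or_ne k i with rfl | hki
    · simp [hiS]
    · have hek : e i ≠ e k := fun h => hki (e.injective h.symm)
      rw [or_iff_right (fun h => hki (e.injective h)), hmem,
        hadj _ _ hek, Icc_inter_Icc, nonempty_Icc, le_min_iff, max_le_iff, max_le_iff]
      constructor
      · rintro ⟨⟨_, h1⟩, ⟨h2, _⟩⟩; exact ⟨h1, h2⟩
      · rintro ⟨h1, h2⟩; exact ⟨⟨hab _, h1⟩, ⟨h2, hab _⟩⟩
  rw [hiff]
  constructor
  · intro hk; exact ⟨S.min'_le k hk, S.le_max' k hk⟩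
  · rintro ⟨hlo, hhi⟩
    have h1 := (hmem _).mp (S.min'_mem hne)
    have h2 := (hmem _).mp (S.max'_mem hne)
    exact (hmem k).mpr ⟨le_trans (haM hhi) h2.1, le_trans h1.2 (hbM hlo)⟩

private lemma dirC {V : Type*} (G : SimpleGraph V) (n : ℕ)
    (e : Fin n ≃ V) (a b : Fin n → ℝ) (hab : ∀ i, a i ≤ b i)
    (ha : StrictMono a) (hb : StrictMono b)
    (hadj : ∀ i j : Fin n, i ≠ j →
      (G.Adj (e i) (e j) ↔ (Icc (a i) (b i) ∩ Icc (a j) (b j)).Nonempty)) :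
    (∃ a b : V → ℝ,
        (∀ v, a v ≤ b v) ∧
        (∀ u v : V, u ≠ v →
          (G.Adj u v ↔ (Icc (a u) (b u) ∩ Icc (a v) (b v)).Nonempty)) ∧
        (∀ u v : V, u ≠ v → ¬ Icc (a u) (b u) ⊂ Icc (a v) (b v))) := by
  refine ⟨a ∘ e.symm, b ∘ e.symm, fun v => hab _, fun u v huv => ?_, fun u v huv hss => ?_⟩
  · have h := hadj (e.symm u) (e.symm v) (fun h => huv (by simpa using congrArg e h))
    simpa using h
  · set i := e.symm u
    set j := e.symm v
    have hij : i ≠ j := fun h => huv (by simpa [i, j] using congrArg e h)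
    have hsub : Icc (a i) (b i) ⊆ Icc (a j) (b j) := hss.1
    rw [Icc_subset_Icc_iff (hab i)] at hsub
    have h1 : j ≤ i := ha.le_iff_le.mp hsub.1
    have h2 : i ≤ j := hb.le_iff_le.mp hsub.2
    exact hij (le_antisymm h2 h1)

/-- For a finite simple graph `G` on `n` vertices, the following are
equivalent: (1) `G` has a proper interval representation; (2) there is an enumeration
of the vertices satisfying the closed-neighborhood condition; (3) there is an
enumeration together with a "canonical" interval representation (strictly increasing
left endpoints, strictly increasing right endpoints, all endpoints distinct). -/
theorem stmt0 {V : Type*} [Fintype V] (G : SimpleGraph V) (n : ℕ)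
    (hn : Fintype.card V = n) :
    ((∃ a b : V → ℝ,
        (∀ v, a v ≤ b v) ∧
        (∀ u v : V, u ≠ v →
          (G.Adj u v ↔ (Icc (a u) (b u) ∩ Icc (a v) (b v)).Nonempty)) ∧
        (∀ u v : V, u ≠ v → ¬ Icc (a u) (b u) ⊂ Icc (a v) (b v)))
      ↔
      (∃ e : Fin n ≃ V, ∀ i : Fin n, ∃ lo hi : Fin n,
        ∀ k : Fin n, (e k = e i ∨ G.Adj (e i) (e k)) ↔ (lo ≤ k ∧ k ≤ hi)))
    ∧
    ((∃ e : Fin n ≃ V, ∀ i : Fin n, ∃ lo hi : Fin n,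
        ∀ k : Fin n, (e k = e i ∨ G.Adj (e i) (e k)) ↔ (lo ≤ k ∧ k ≤ hi))
      ↔
      (∃ e : Fin n ≃ V, ∃ a b : Fin n → ℝ,
        (∀ i, a i ≤ b i) ∧
        StrictMono a ∧ StrictMono b ∧
        (∀ i j : Fin n, a i ≠ b j) ∧
        (∀ i j : Fin n, i ≠ j →
          (G.Adj (e i) (e j) ↔ (Icc (a i) (b i) ∩ Icc (a j) (b j)).Nonempty)))) := by
  have h12 : ∀ _ : (∃ a b : V → ℝ,
        (∀ v, a v ≤ b v) ∧
        (∀ u v : V, u ≠ v →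
          (G.Adj u v ↔ (Icc (a u) (b u) ∩ Icc (a v) (b v)).Nonempty)) ∧
        (∀ u v : V, u ≠ v → ¬ Icc (a u) (b u) ⊂ Icc (a v) (b v))),
      (∃ e : Fin n ≃ V, ∀ i : Fin n, ∃ lo hi : Fin n,
        ∀ k : Fin n, (e k = e i ∨ G.Adj (e i) (e k)) ↔ (lo ≤ k ∧ k ≤ hi)) := by
    rintro ⟨a, b, hab, hadj, hprop⟩
    exact dirA G n hn a b hab hadj hprop
  have h23 : ∀ _ : (∃ e : Fin n ≃ V, ∀ i : Fin n, ∃ lo hi : Fin n,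
        ∀ k : Fin n, (e k = e i ∨ G.Adj (e i) (e k)) ↔ (lo ≤ k ∧ k ≤ hi)),
      (∃ e : Fin n ≃ V, ∃ a b : Fin n → ℝ,
        (∀ i, a i ≤ b i) ∧
        StrictMono a ∧ StrictMono b ∧
        (∀ i j : Fin n, a i ≠ b j) ∧
        (∀ i j : Fin n, i ≠ j →
          (G.Adj (e i) (e j) ↔ (Icc (a i) (b i) ∩ Icc (a j) (b j)).Nonempty))) := by
    rintro ⟨e, h⟩
    choose lo hi hspec using h
    exact dirB G n e lo hi hspec
  have h31 : ∀ _ : (∃ e : Fin n ≃ V, ∃ a b : Fin n → ℝ,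
        (∀ i, a i ≤ b i) ∧
        StrictMono a ∧ StrictMono b ∧
        (∀ i j : Fin n, a i ≠ b j) ∧
        (∀ i j : Fin n, i ≠ j →
          (G.Adj (e i) (e j) ↔ (Icc (a i) (b i) ∩ Icc (a j) (b j)).Nonempty))),
      (∃ a b : V → ℝ,
        (∀ v, a v ≤ b v) ∧
        (∀ u v : V, u ≠ v →
          (G.Adj u v ↔ (Icc (a u) (b u) ∩ Icc (a v) (b v)).Nonempty)) ∧
        (∀ u v : V, u ≠ v → ¬ Icc (a u) (b u) ⊂ Icc (a v) (b v))) := by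
    rintro ⟨e, a, b, hab, ha, hb, _, hadj⟩
    exact dirC G n e a b hab ha hb hadj
  exact ⟨⟨h12, fun h => h31 (h23 h)⟩, ⟨h23, fun h => h12 (h31 h)⟩⟩
end

section
/- Let G be a finite simple graph on vertices v_1, …, v_n, and suppose ([a_i, b_i])_{i=1}^n and ([c_i, d_i])_{i=1}^n are two interval representations of G (distinct vertices adjacent iff intervals intersect) that are both canonical with respect to this same enumeration, i.e., a_1 < ⋯ < a_n, b_1 < ⋯ < b_n and a_i ≠ b_j for all i, j, and likewise c_1 < ⋯ < c_n, d_1 < ⋯ < d_n and c_i ≠ d_j for all i, j. Then for all i, j ∈ {1, …, n}, a_i < b_j if and only if c_i < d_j; consequently the canonical sequences of the two representations coincide. -/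
open Set

/-- `S : Fin (2*n) → Fin n` is the canonical sequence of the canonical interval
representation with left endpoints `a` and right endpoints `b`: there is a strictly
increasing enumeration `val` of all `2n` endpoint values, and `S k` is the index of
the vertex owning the `k`-th smallest endpoint. -/
def IsCanonSeq {n : ℕ} (a b : Fin n → ℝ) (S : Fin (2 * n) → Fin n) : Prop :=
  ∃ val : Fin (2 * n) → ℝ, StrictMono val ∧
    Set.range val = Set.range a ∪ Set.range b ∧
    ∀ k, a (S k) = val k ∨ b (S k) = val k

/-- two canonical interval representations of the same graph with respect
to the same enumeration of the vertices satisfy `a i < b j ↔ c i < d j` for all `i, j`;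
consequently their canonical sequences coincide. -/
theorem stmt1 {n : ℕ} (G : SimpleGraph (Fin n)) (a b c d : Fin n → ℝ)
    (hab : ∀ i, a i ≤ b i) (hcd : ∀ i, c i ≤ d i)
    (hAdj1 : ∀ i j : Fin n, i ≠ j →
      (G.Adj i j ↔ (Icc (a i) (b i) ∩ Icc (a j) (b j)).Nonempty))
    (hAdj2 : ∀ i j : Fin n, i ≠ j →
      (G.Adj i j ↔ (Icc (c i) (d i) ∩ Icc (c j) (d j)).Nonempty))
    (ha : StrictMono a) (hb : StrictMono b) (hne1 : ∀ i j : Fin n, a i ≠ b j)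
    (hc : StrictMono c) (hd : StrictMono d) (hne2 : ∀ i j : Fin n, c i ≠ d j) :
    (∀ i j : Fin n, a i < b j ↔ c i < d j) ∧
    (∀ S S' : Fin (2 * n) → Fin n, IsCanonSeq a b S → IsCanonSeq c d S' → S = S') := by
  classical
  have key : ∀ i j : Fin n, a i < b j ↔ c i < d j := by
    intro i j
    rcases lt_trichotomy i j with hij | hij | hij
    · constructor <;> intro _
      · exact lt_of_lt_of_le (lt_of_lt_of_le (hc hij) (hcd j)) le_rfl
      · exact lt_of_lt_of_le (ha hij) (hab j)
    · subst hij
      constructor <;> intro _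
      · exact lt_of_le_of_ne (hcd i) (hne2 i i)
      · exact lt_of_le_of_ne (hab i) (hne1 i i)
    · -- j < i
      have hne : i ≠ j := (ne_of_gt hij)
      have h1 : a i < b j ↔ G.Adj i j := by
        rw [hAdj1 i j hne]
        constructor
        · intro h
          exact ⟨a i, ⟨le_rfl, hab i⟩, ⟨le_of_lt (ha hij), le_of_lt h⟩⟩
        · rintro ⟨x, ⟨hx1, _⟩, ⟨_, hx4⟩⟩
          exact lt_of_le_of_ne (le_trans hx1 hx4) (hne1 i j)
      have h2 : c i < d j ↔ G.Adj i j := by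
        rw [hAdj2 i j hne]
        constructor
        · intro h
          exact ⟨c i, ⟨le_rfl, hcd i⟩, ⟨le_of_lt (hc hij), le_of_lt h⟩⟩
        · rintro ⟨x, ⟨hx1, _⟩, ⟨_, hx4⟩⟩
          exact lt_of_le_of_ne (le_trans hx1 hx4) (hne2 i j)
      rw [h1, h2]
  refine ⟨key, ?_⟩
  have key' : ∀ i j : Fin n, b i < a j ↔ d i < c j := by
    intro i j
    rw [← not_le, ← not_le]
    constructor <;> intro h hle <;> apply h
    · exact le_of_lt ((key j i).mpr (lt_of_le_of_ne hle (hne2 j i)))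
    · exact le_of_lt ((key j i).mp (lt_of_le_of_ne hle (hne1 j i)))
  intro S S' hS hS'
  obtain ⟨val, hvmono, hvrange, hSk⟩ := hS
  obtain ⟨val', hvmono', hvrange', hSk'⟩ := hS'
  -- define g
  set g : Fin (2 * n) → ℝ := fun k => if a (S k) = val k then c (S k) else d (S k) with hg
  have hgspec : ∀ k, (a (S k) = val k ∧ g k = c (S k)) ∨ (b (S k) = val k ∧ g k = d (S k)) := by
    intro k
    rcases hSk k with h | h
    · exact Or.inl ⟨h, if_pos h⟩
    · have hne : a (S k) ≠ val k := by rw [← h]; exact hne1 _ _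
      exact Or.inr ⟨h, if_neg hne⟩
  have hgmono : StrictMono g := by
    intro k l hkl
    have hv : val k < val l := hvmono hkl
    rcases hgspec k with ⟨hk1, hk2⟩ | ⟨hk1, hk2⟩ <;> rcases hgspec l with ⟨hl1, hl2⟩ | ⟨hl1, hl2⟩ <;>
      rw [hk2, hl2]
    · exact hc (ha.lt_iff_lt.mp (by rw [hk1, hl1]; exact hv))
    · exact (key _ _).mp (by rw [hk1, hl1]; exact hv)
    · exact (key' _ _).mp (by rw [hk1, hl1]; exact hv)
    · exact hd (hb.lt_iff_lt.mp (by rw [hk1, hl1]; exact hv))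
  -- range of g equals range c ∪ range d
  have hcard : (Finset.image c Finset.univ ∪ Finset.image d Finset.univ).card = 2 * n := by
    rw [Finset.card_union_of_disjoint, Finset.card_image_of_injective _ hc.injective,
      Finset.card_image_of_injective _ hd.injective, Finset.card_univ, Fintype.card_fin]
    · ring
    · rw [Finset.disjoint_left]
      rintro x hx hy
      simp only [Finset.mem_image, Finset.mem_univ, true_and] at hx hy
      obtain ⟨i, rfl⟩ := hx
      obtain ⟨j, hj⟩ := hy
      exact hne2 i j hj.symm
  have hgsub : Finset.image g Finset.univ ⊆ Finset.image c Finset.univ ∪ Finset.image d Finset.univ := by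
    intro x hx
    simp only [Finset.mem_image, Finset.mem_univ, true_and, Finset.mem_union] at hx ⊢
    obtain ⟨k, rfl⟩ := hx
    rcases hgspec k with ⟨_, h2⟩ | ⟨_, h2⟩
    · exact Or.inl ⟨S k, h2.symm⟩
    · exact Or.inr ⟨S k, h2.symm⟩
  have himg : Finset.image g Finset.univ = Finset.image c Finset.univ ∪ Finset.image d Finset.univ := by
    apply Finset.eq_of_subset_of_card_le hgsub
    rw [hcard, Finset.card_image_of_injective _ hgmono.injective, Finset.card_univ, Fintype.card_fin]
  have hrg : Set.range g = Set.range val' := by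
    rw [hvrange']
    have h1 : Set.range g = ↑(Finset.image g Finset.univ) := by
      simp [Finset.coe_image]
    have h2 : Set.range c ∪ Set.range d =
        ↑(Finset.image c Finset.univ ∪ Finset.image d Finset.univ) := by
      simp [Finset.coe_image, Finset.coe_union]
    rw [h1, h2, himg]
  haveI : WellFoundedLT (Fin (2 * n)) := inferInstance
  have hgval : g = val' := (hgmono.range_inj hvmono').mp hrg
  -- conclude S = S'
  funext k
  rcases hgspec k with ⟨_, h2⟩ | ⟨_, h2⟩
  · -- val' k = c (S k)
    have hv : c (S k) = val' k := by rw [← h2, hgval]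
    rcases hSk' k with h | h
    · exact ((hc.injective (h.trans hv.symm)).symm)
    · exact absurd (h.trans hv.symm) fun hh => hne2 (S k) (S' k) hh.symm
  · have hv : d (S k) = val' k := by rw [← h2, hgval]
    rcases hSk' k with h | h
    · exact absurd (h.trans hv.symm) (hne2 (S' k) (S k))
    · exact ((hd.injective (h.trans hv.symm)).symm)
end

section
/- Let G be a finite simple graph on n vertices with a canonical representation: an enumeration v_1, …, v_n and intervals I_{v_i} = [a_i, b_i] with a_1 < ⋯ < a_n, b_1 < ⋯ < b_n, a_i ≠ b_j for all i, j, and distinct vertices adjacent iff their intervals intersect. For each i, let L(i) = min{ k : v_k ∈ N[v_i] } and U(i) = max{ k : v_k ∈ N[v_i] }. Then for every i, exactly i + L(i) − 2 of the 2n endpoint values are strictly smaller than a_i, and exactly i + U(i) − 1 of them are strictly smaller than b_i; equivalently, in the canonical sequence S the two occurrences of the index i are at positions i + L(i) − 1 and i + U(i). In particular, the canonical sequence is determined by the adjacency relation of G and the enumeration (it equals the stair sequence of the augmented adjacency matrix). -/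
/-!
Since the left endpoints and the right endpoints are both sorted by index, the closed
neighbourhood of `v_i` is the index interval `[L(i), U(i)]`: the right endpoints below `a_i`
are exactly those of `v_0, …, v_{L(i)-1}`, and the left endpoints below `b_i` exactly those of
`v_0, …, v_{U(i)}`. Adding the `i` left (resp. right) endpoints below `a_i` (resp. `b_i`) gives
the counts, and the position of a value in the merged sorted sequence is the number of
endpoint values below it.
-/

open Set

theorem closedNbhd_indices_eq_overlapping {V ι α : Type*} [LinearOrder α] (G : SimpleGraph V) {e : ι → V}
    (he : Function.Injective e) {a b : ι → α} (hab : ∀ i, a i ≤ b i)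
    (hAdj : ∀ i j, i ≠ j → (G.Adj (e i) (e j) ↔ (Icc (a i) (b i) ∩ Icc (a j) (b j)).Nonempty))
    (i : ι) : {k | e k = e i ∨ G.Adj (e i) (e k)} = {k | a i ≤ b k ∧ a k ≤ b i} := by
  ext k
  rcases eq_or_ne k i with rfl | hki
  · simp [hab k]
  · rw [mem_ofPred_eq, mem_ofPred_eq, he.eq_iff, hAdj i k hki.symm, Icc_inter_Icc, nonempty_Icc]
    simp only [hki, false_or, max_le_iff, le_min_iff, hab i, hab k, true_and, and_true]
    exact and_comm

section IntervalOrder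

variable {ι α : Type*} [LinearOrder ι] [LinearOrder α] {a b : ι → α} {i l u : ι}

theorem lt_iff_of_isLeast_overlapping (ha : Monotone a) (hb : Monotone b) (hab : a i ≤ b i)
    (hl : IsLeast {k | a i ≤ b k ∧ a k ≤ b i} l) (j : ι) : j < l ↔ b j < a i := by
  constructor
  · intro hjl
    by_contra! hij
    have hli : l ≤ i := hl.2 ⟨hab, hab⟩
    exact (hl.2 ⟨hij, (ha (hjl.trans_le hli).le).trans hab⟩).not_gt hjl
  · intro hji
    by_contra! hlj
    exact (hl.1.1.trans (hb hlj)).not_gt hji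

theorem lt_iff_of_isGreatest_overlapping (ha : Monotone a) (hb : Monotone b) (hab : a i ≤ b i)
    (hu : IsGreatest {k | a i ≤ b k ∧ a k ≤ b i} u) (j : ι) : u < j ↔ b i < a j :=
  @lt_iff_of_isLeast_overlapping ιᵒᵈ αᵒᵈ _ _ b a i u hb.dual ha.dual hab
    ⟨hu.1.symm, fun _ hk => hu.2 hk.symm⟩ j

end IntervalOrder

open Finset

theorem Fin.card_filter_eq_of_iff_lt {n : ℕ} {p : Fin n → Prop} [DecidablePred p] {m : Fin n}
    (h : ∀ j, p j ↔ j < m) : #{j | p j} = m := by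
  rw [filter_congr fun j _ => h j, filter_gt_eq_Iio, Fin.card_Iio]

theorem Fin.card_filter_eq_of_iff_le {n : ℕ} {p : Fin n → Prop} [DecidablePred p] {m : Fin n}
    (h : ∀ j, p j ↔ j ≤ m) : #{j | p j} = m + 1 := by
  rw [filter_congr fun j _ => h j, filter_ge_eq_Iic, Fin.card_Iic]

theorem StrictMono.card_filter_apply_lt_apply {n : ℕ} {α : Type*} [LinearOrder α]
    {f : Fin n → α} (hf : StrictMono f) (i : Fin n) : #{j | f j < f i} = i :=
  Fin.card_filter_eq_of_iff_lt fun _ => hf.lt_iff_lt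

theorem card_filter_lt_of_range_eq_union {κ ι ι' α : Type*} [Fintype κ] [Fintype ι]
    [Fintype ι'] [LinearOrder α] {f : κ → α} {g : ι → α} {h : ι' → α}
    (hf : Function.Injective f) (hg : Function.Injective g) (hh : Function.Injective h)
    (hrange : range f = range g ∪ range h) (hdisj : Disjoint (range g) (range h)) (x : α) :
    #{k | f k < x} = #{j | g j < x} + #{j | h j < x} := by
  have himage : Finset.univ.image f = Finset.univ.image g ∪ Finset.univ.image h := by
    apply coe_injective
    push_cast [coe_image, coe_univ, Set.image_univ]
    exact hrange
  have hdisj' : Disjoint (Finset.univ.image g) (Finset.univ.image h) := by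
    rw [← disjoint_coe]
    push_cast [coe_image, coe_univ, Set.image_univ]
    exact hdisj
  rw [← Finset.card_image_of_injective _ hf, ← Finset.card_image_of_injective _ hg,
    ← Finset.card_image_of_injective _ hh, ← filter_image (p := (· < x)),
    ← filter_image (p := (· < x)), ← filter_image (p := (· < x)), himage, filter_union,
    card_union_of_disjoint (disjoint_filter_filter hdisj')]

theorem StrictMono.apply_eq_iff_eq_card {N : ℕ} {α : Type*} [LinearOrder α] {f : Fin N → α}
    (hf : StrictMono f) {x : α} (hx : x ∈ range f) (k : Fin N) :
    f k = x ↔ (k : ℕ) = #{m | f m < x} := by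
  obtain ⟨m, rfl⟩ := hx
  rw [hf.card_filter_apply_lt_apply, hf.injective.eq_iff, Fin.val_inj]

theorem eq_iff_apply_eq_or_of_forall_ne {κ ι β : Type*} {a b : ι → β} {S : κ → ι} {val : κ → β}
    (ha : Function.Injective a) (hb : Function.Injective b) (hne : ∀ i j, a i ≠ b j)
    (hS : ∀ k, a (S k) = val k ∨ b (S k) = val k) (i : ι) (k : κ) :
    S k = i ↔ val k = a i ∨ val k = b i := by
  constructor
  · rintro rfl
    exact (hS k).imp Eq.symm Eq.symm
  · rintro (hk | hk) <;> rcases hS k with hSk | hSk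
    · exact ha (hSk.trans hk)
    · exact absurd (hSk.trans hk).symm (hne i (S k))
    · exact absurd (hSk.trans hk) (hne (S k) i)
    · exact hb (hSk.trans hk)

/-- Indices are 0-based: `i + L i` and `i + U i + 1` are the paper's `i + L(i) − 2` and
`i + U(i) − 1`. -/
theorem stmt2_general {V : Type*} {n : ℕ} (G : SimpleGraph V) (e : Fin n ≃ V)
    (a b : Fin n → ℝ)
    (hab : ∀ i, a i ≤ b i) (ha : StrictMono a) (hb : StrictMono b)
    (hne : ∀ i j : Fin n, a i ≠ b j)
    (hAdj : ∀ i j : Fin n, i ≠ j →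
      (G.Adj (e i) (e j) ↔ (Icc (a i) (b i) ∩ Icc (a j) (b j)).Nonempty))
    (L U : Fin n → Fin n)
    (hL : ∀ i, IsLeast {k | e k = e i ∨ G.Adj (e i) (e k)} (L i))
    (hU : ∀ i, IsGreatest {k | e k = e i ∨ G.Adj (e i) (e k)} (U i)) :
    ∀ i : Fin n,
      ((Finset.univ.filter fun j => a j < a i).card
          + (Finset.univ.filter fun j => b j < a i).card = (i : ℕ) + (L i : ℕ)) ∧
      ((Finset.univ.filter fun j => a j < b i).card
          + (Finset.univ.filter fun j => b j < b i).card = (i : ℕ) + (U i : ℕ) + 1) ∧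
      (∀ S : Fin (2 * n) → Fin n, IsCanonSeq a b S →
        ∀ k : Fin (2 * n),
          S k = i ↔ ((k : ℕ) = (i : ℕ) + (L i : ℕ) ∨ (k : ℕ) = (i : ℕ) + (U i : ℕ) + 1)) := by
  intro i
  have hN := closedNbhd_indices_eq_overlapping G e.injective hab hAdj i
  have hbelow_a : #{j | b j < a i} = L i := Fin.card_filter_eq_of_iff_lt fun j =>
    (lt_iff_of_isLeast_overlapping ha.monotone hb.monotone (hab i) (hN ▸ hL i) j).symm
  have hbelow_b : #{j | a j < b i} = U i + 1 := Fin.card_filter_eq_of_iff_le fun j => by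
    rw [← not_lt, lt_iff_of_isGreatest_overlapping ha.monotone hb.monotone (hab i) (hN ▸ hU i) j,
      not_lt, (hne j i).le_iff_lt]
  have hpos_a : #{j | a j < a i} + #{j | b j < a i} = i + L i := by
    rw [ha.card_filter_apply_lt_apply, hbelow_a]
  have hpos_b : #{j | a j < b i} + #{j | b j < b i} = i + U i + 1 := by
    rw [hbelow_b, hb.card_filter_apply_lt_apply]
    omega
  refine ⟨hpos_a, hpos_b, ?_⟩
  rintro S ⟨val, hval, hrange, hS⟩ k
  have hpos {x : ℝ} (hx : x ∈ range a ∪ range b) :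
      val k = x ↔ (k : ℕ) = #{j | a j < x} + #{j | b j < x} := by
    rw [hval.apply_eq_iff_eq_card (hrange ▸ hx), card_filter_lt_of_range_eq_union
      hval.injective ha.injective hb.injective hrange (disjoint_range_iff.2 hne)]
  rw [eq_iff_apply_eq_or_of_forall_ne ha.injective hb.injective hne hS,
    hpos (Or.inl (mem_range_self i)), hpos (Or.inr (mem_range_self i)), hpos_a, hpos_b]

/-- for a canonical representation of `G` (with enumeration `e` and
intervals `[a i, b i]`), letting `L i` and `U i` be the least and greatest indices in
the closed neighborhood of the `i`-th vertex, exactly `i + L i` endpoint values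
(0-based; `i + L(i) − 2` in 1-based counting) are strictly smaller than `a i` and
exactly `i + U i + 1` (i.e. `i + U(i) − 1` 1-based) are strictly smaller than `b i`;
equivalently, in the canonical sequence the two occurrences of `i` are at positions
`i + L i` and `i + U i + 1` (0-based). -/
theorem stmt2 {V : Type*} [Fintype V] {n : ℕ} (G : SimpleGraph V) (e : Fin n ≃ V)
    (a b : Fin n → ℝ)
    (hab : ∀ i, a i ≤ b i) (ha : StrictMono a) (hb : StrictMono b)
    (hne : ∀ i j : Fin n, a i ≠ b j)
    (hAdj : ∀ i j : Fin n, i ≠ j →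
      (G.Adj (e i) (e j) ↔ (Icc (a i) (b i) ∩ Icc (a j) (b j)).Nonempty))
    (L U : Fin n → Fin n)
    (hL : ∀ i, IsLeast {k | e k = e i ∨ G.Adj (e i) (e k)} (L i))
    (hU : ∀ i, IsGreatest {k | e k = e i ∨ G.Adj (e i) (e k)} (U i)) :
    ∀ i : Fin n,
      ((Finset.univ.filter fun j => a j < a i).card
          + (Finset.univ.filter fun j => b j < a i).card = (i : ℕ) + (L i : ℕ)) ∧
      ((Finset.univ.filter fun j => a j < b i).card
          + (Finset.univ.filter fun j => b j < b i).card = (i : ℕ) + (U i : ℕ) + 1) ∧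
      (∀ S : Fin (2 * n) → Fin n, IsCanonSeq a b S →
        ∀ k : Fin (2 * n),
          S k = i ↔ ((k : ℕ) = (i : ℕ) + (L i : ℕ) ∨ (k : ℕ) = (i : ℕ) + (U i : ℕ) + 1)) :=
  stmt2_general G e a b hab ha hb hne hAdj L U hL hU
end

section
/- Let G be a connected finite simple graph on n vertices that admits a canonical representation. Then its canonical sequence is unique up to reversal: for any two canonical representations of G, with canonical sequences S, S' : {1, …, 2n} → {1, …, n}, either S'(k) = S(k) for all k, or S'(k) = n + 1 − S(2n + 1 − k) for all k. -/
open Set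

/-!
Listing the vertices by increasing left (equivalently right) endpoints makes an interval
representation an umbrella ordering: an edge between positions `s < t` forces every edge between
positions inside `[s, t]`. In a connected graph two umbrella orderings agree up to reversal and up
to permuting true twins (vertices with the same closed neighbourhood). Indeed, the first vertex of
one ordering is a twin of the first or of the last vertex of the other; after reversing the second
ordering if necessary, induction along the positions shows that vertices in equal positions are
twins. So both orderings induce the same adjacency between positions. For `i < j` that adjacency
is the comparison `a j < b i`, and these comparisons fix the relative order of all `2n` endpoints,
which is the canonical sequence.
-/

open Function
open scoped Finset

lemma card_filter_lt_eq_of_range_eq {ι κ α : Type*} [Fintype ι] [Fintype κ] [LinearOrder α]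
    {f : ι → α} {g : κ → α} (hf : Injective f) (hg : Injective g)
    (h : range f = range g) (c : α) : #{i | f i < c} = #{j | g j < c} := by
  classical
  have himage : Finset.univ.image f = Finset.univ.image g :=
    Finset.coe_injective (by simpa using h)
  rw [← Finset.card_image_of_injective _ hf, ← Finset.card_image_of_injective _ hg,
    ← Finset.filter_image (p := (· < c)), ← Finset.filter_image (p := (· < c)), himage]

lemma StrictMono.card_filter_lt_eq {ι α : Type*} [Fintype ι] [LinearOrder α] {m : ℕ}
    {w : Fin m → α} (hw : StrictMono w) {g : ι → α} (hg : Injective g)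
    (hr : range w = range g) (k : Fin m) : #{z | g z < w k} = k := by
  rw [← card_filter_lt_eq_of_range_eq hw.injective hg hr]
  simp [hw.lt_iff_lt, Finset.filter_gt_eq_Iio]

lemma eq_of_apply_eq_of_lt_iff_lt {ι α β : Type*} [Fintype ι] [LinearOrder α] [LinearOrder β]
    {f : ι → α} {f' : ι → β} (hf : Injective f) (hf' : Injective f')
    (hlt : ∀ x y, f x < f y ↔ f' x < f' y) {m : ℕ} {val : Fin m → α} {val' : Fin m → β}
    (hval : StrictMono val) (hval' : StrictMono val') (hr : range val = range f)
    (hr' : range val' = range f') {x x' : ι} {k : Fin m} (hx : f x = val k)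
    (hx' : f' x' = val' k) : x = x' := by
  -- `k` counts the points below `f x` and below `f' x'`, and these counts agree under `hlt`.
  obtain ⟨l, hl⟩ : f x' ∈ range val := hr ▸ mem_range_self x'
  have hlk : l = k := Fin.ext <| by
    rw [← hval.card_filter_lt_eq hf hr l, ← hval'.card_filter_lt_eq hf' hr' k, hl, ← hx']
    simp only [hlt]
  exact hf (hx.trans (hlk ▸ hl))

lemma Equiv.exists_ge_apply_mem_of_forall_lt {ι V : Type*} [Fintype ι] [LinearOrder ι]
    (e e' : ι ≃ V) {C : Set V} {i : ι} (hlt : ∀ j < i, e j ∈ C ↔ e' j ∈ C) (hi : e i ∈ C) :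
    ∃ j ≥ i, e' j ∈ C := by
  classical
  by_contra! hge
  have hcard : #{j | e j ∈ C} = #{j | e' j ∈ C} :=
    Finset.card_equiv (e.trans e'.symm) (by simp)
  have hsub : ({j | e' j ∈ C} : Finset ι) ⊆ ({j | j < i ∧ e j ∈ C} : Finset ι) := by
    intro j hj
    simp only [Finset.mem_filter, Finset.mem_univ, true_and] at hj ⊢
    have hji : j < i := lt_of_not_ge fun hij => hge j hij hj
    exact ⟨hji, (hlt j hji).2 hj⟩
  have hssub : ({j | j < i ∧ e j ∈ C} : Finset ι) ⊂ ({j | e j ∈ C} : Finset ι) :=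
    (Finset.ssubset_iff_of_subset fun _ => by simp +contextual).2
      ⟨i, by simpa using hi, by simp⟩
  exact (Finset.card_lt_card hssub).not_ge (hcard ▸ Finset.card_le_card hsub)

namespace SimpleGraph

variable {V : Type*} (G : SimpleGraph V) {n : ℕ}

def closedNeighborSet (v : V) : Set V := insert v (G.neighborSet v)

def IsUmbrellaOrdering (e : Fin n ≃ V) : Prop :=
  ∀ ⦃s i j t : Fin n⦄, s ≤ i → i < j → j ≤ t → G.Adj (e s) (e t) → G.Adj (e i) (e j)

variable {G}

@[simp]
lemma mem_closedNeighborSet {u v : V} : v ∈ G.closedNeighborSet u ↔ v = u ∨ G.Adj u v :=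
  Iff.rfl

lemma self_mem_closedNeighborSet (v : V) : v ∈ G.closedNeighborSet v := Or.inl rfl

lemma mem_closedNeighborSet_comm {u v : V} :
    v ∈ G.closedNeighborSet u ↔ u ∈ G.closedNeighborSet v := by
  simp [eq_comm, G.adj_comm]

lemma Adj.of_closedNeighborSet_eq {u u' v v' : V} (huv : G.Adj u v)
    (hu : G.closedNeighborSet u = G.closedNeighborSet u')
    (hv : G.closedNeighborSet v = G.closedNeighborSet v') (hne : u' ≠ v') : G.Adj u' v' := by
  have hvu' : v ∈ G.closedNeighborSet u' := hu ▸ Or.inr huv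
  have hu'v' : u' ∈ G.closedNeighborSet v' := hv ▸ mem_closedNeighborSet_comm.1 hvu'
  exact ((mem_closedNeighborSet.1 hu'v').resolve_left hne).symm

lemma adj_iff_adj_of_forall_closedNeighborSet_eq {ι : Type*} {f f' : ι → V}
    (hf : Injective f) (hf' : Injective f')
    (h : ∀ i, G.closedNeighborSet (f i) = G.closedNeighborSet (f' i)) (i j : ι) :
    G.Adj (f i) (f j) ↔ G.Adj (f' i) (f' j) :=
  ⟨fun hij => hij.of_closedNeighborSet_eq (h i) (h j) (hf'.ne fun h' => hij.ne (congrArg f h')),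
    fun hij => hij.of_closedNeighborSet_eq (h i).symm (h j).symm
      (hf.ne fun h' => hij.ne (congrArg f' h'))⟩

namespace IsUmbrellaOrdering

variable {e e' : Fin n ≃ V}

lemma reverse (he : G.IsUmbrellaOrdering e) : G.IsUmbrellaOrdering (Fin.revPerm.trans e) :=
  fun _ _ _ _ hsi hij hjt hst =>
    (he (Fin.rev_le_rev.2 hjt) (Fin.rev_lt_rev.2 hij) (Fin.rev_le_rev.2 hsi) hst.symm).symm

lemma mem_closedNeighborSet_of_mem (he : G.IsUmbrellaOrdering e) {s i j t : Fin n}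
    (hsi : s ≤ i) (hij : i ≤ j) (hjt : j ≤ t) (hst : e t ∈ G.closedNeighborSet (e s)) :
    e j ∈ G.closedNeighborSet (e i) := by
  rcases hij.eq_or_lt with rfl | hij
  · exact self_mem_closedNeighborSet _
  rcases hst with hst | hst
  · have := e.injective hst
    omega
  · exact Or.inr (he hsi hij hjt hst)

lemma mem_closedNeighborSet_of_le_of_le (he : G.IsUmbrellaOrdering e) {q i j : Fin n} {v : V}
    (hqi : q ≤ i) (hij : i ≤ j) (hq : v ∈ G.closedNeighborSet (e q))
    (hj : v ∈ G.closedNeighborSet (e j)) : v ∈ G.closedNeighborSet (e i) := by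
  obtain ⟨k, rfl⟩ := e.surjective v
  rcases le_total k i with hki | hik
  · exact mem_closedNeighborSet_comm.1
      (he.mem_closedNeighborSet_of_mem le_rfl hki hij (mem_closedNeighborSet_comm.1 hj))
  · exact he.mem_closedNeighborSet_of_mem hqi hik le_rfl hq

lemma mem_closedNeighborSet_of_le_of_mem (he : G.IsUmbrellaOrdering e) {i j k : Fin n}
    (hij : i ≤ j) (hik : i ≤ k) (hj : e j ∈ G.closedNeighborSet (e i))
    (hk : e k ∈ G.closedNeighborSet (e i)) : e k ∈ G.closedNeighborSet (e j) := by
  rcases le_total j k with hjk | hkj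
  · exact he.mem_closedNeighborSet_of_mem hij hjk le_rfl hk
  · exact mem_closedNeighborSet_comm.1 (he.mem_closedNeighborSet_of_mem hik hkj le_rfl hj)

lemma closedNeighborSet_eq_of_le_of_le (he : G.IsUmbrellaOrdering e) {q i j : Fin n}
    (hqi : q ≤ i) (hij : i ≤ j) (hqj : G.closedNeighborSet (e q) = G.closedNeighborSet (e j)) :
    G.closedNeighborSet (e i) = G.closedNeighborSet (e q) := by
  refine Subset.antisymm (fun v hv => ?_)
    (fun v hv => he.mem_closedNeighborSet_of_le_of_le hqi hij hv (hqj ▸ hv))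
  obtain ⟨k, rfl⟩ := e.surjective v
  rcases le_total k q with hkq | hqk
  · exact mem_closedNeighborSet_comm.1
      (he.mem_closedNeighborSet_of_mem le_rfl hkq hqi (mem_closedNeighborSet_comm.1 hv))
  rcases le_total k j with hkj | hjk
  · exact mem_closedNeighborSet_comm.1 (he.mem_closedNeighborSet_of_le_of_le hqk hkj
      (self_mem_closedNeighborSet _) (hqj ▸ self_mem_closedNeighborSet _))
  · exact hqj ▸ he.mem_closedNeighborSet_of_mem hij hjk le_rfl hv

lemma closedNeighborSet_first_subset (he : G.IsUmbrellaOrdering e) [NeZero n] {v : V}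
    (hv : v ∈ G.closedNeighborSet (e 0)) : G.closedNeighborSet (e 0) ⊆ G.closedNeighborSet v := by
  intro t ht
  obtain ⟨j, rfl⟩ := e.surjective v
  obtain ⟨k, rfl⟩ := e.surjective t
  exact he.mem_closedNeighborSet_of_le_of_mem (Fin.zero_le j) (Fin.zero_le k) hv ht

lemma mem_or_mem_of_notMem_first (he : G.IsUmbrellaOrdering e) [NeZero n] {x w s s' : V}
    (hx : x ∈ G.closedNeighborSet (e 0)) (hw : w ∈ G.closedNeighborSet (e 0))
    (hs : s ∉ G.closedNeighborSet (e 0)) (hs' : s' ∉ G.closedNeighborSet (e 0))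
    (hxs : s ∈ G.closedNeighborSet x) (hws' : s' ∈ G.closedNeighborSet w) :
    s ∈ G.closedNeighborSet w ∨ s' ∈ G.closedNeighborSet x := by
  have hlt : ∀ {k l : Fin n}, e k ∈ G.closedNeighborSet (e 0) →
      e l ∉ G.closedNeighborSet (e 0) → k < l := fun {_ l} hk hl =>
    lt_of_not_ge fun hlk => hl (he.mem_closedNeighborSet_of_mem le_rfl (Fin.zero_le l) hlk hk)
  obtain ⟨kx, rfl⟩ := e.surjective x
  obtain ⟨kw, rfl⟩ := e.surjective w
  obtain ⟨ks, rfl⟩ := e.surjective s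
  obtain ⟨ks', rfl⟩ := e.surjective s'
  rcases le_total kx kw with h | h
  · exact .inl (he.mem_closedNeighborSet_of_mem h (hlt hw hs).le le_rfl hxs)
  · exact .inr (he.mem_closedNeighborSet_of_mem h (hlt hx hs').le le_rfl hws')

lemma adj_of_val_add_one_eq (he : G.IsUmbrellaOrdering e) (hconn : G.Connected) {i j : Fin n}
    (hij : (i : ℕ) + 1 = j) : G.Adj (e i) (e j) := by
  obtain ⟨p⟩ := hconn.preconnected (e i) (e j)
  obtain ⟨d, -, hd₁, hd₂⟩ :=
    p.exists_boundary_dart (e.symm ⁻¹' Iic i) (by simp)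
      (by simpa using Fin.lt_def.2 (by omega))
  simp only [mem_preimage, mem_Iic, not_le, Fin.lt_def] at hd₁ hd₂
  exact he (t := e.symm d.snd) hd₁ (Fin.lt_def.2 (by omega)) (Fin.le_def.2 (by omega))
    (by simp [d.adj])

lemma exists_lt_of_closedNeighborSet_ne (he : G.IsUmbrellaOrdering e) (hconn : G.Connected)
    [NeZero n] {i : Fin n} (hi : G.closedNeighborSet (e 0) ≠ G.closedNeighborSet (e i)) :
    ∃ k < i, e k ∈ G.closedNeighborSet (e i) ∧
      G.closedNeighborSet (e k) ≠ G.closedNeighborSet (e i) := by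
  let P (k : ℕ) : Prop :=
    ∃ hk : k < n, k ≤ i ∧ G.closedNeighborSet (e ⟨k, hk⟩) = G.closedNeighborSet (e i)
  obtain ⟨k, hk, ⟨hk1, hki, hsucc⟩⟩ := Nat.exists_not_and_succ_of_not_zero_of_exists
    (p := P) (fun ⟨_, _, h⟩ => hi h) ⟨i, i.isLt, le_rfl, rfl⟩
  refine ⟨⟨k, by omega⟩, Fin.lt_def.2 (by simp; omega), ?_, fun h => hk ⟨by omega, by omega, h⟩⟩
  rw [← hsucc]
  exact mem_closedNeighborSet_comm.1 (Or.inr (he.adj_of_val_add_one_eq hconn rfl))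

lemma closedNeighborSet_first_eq_or_eq_last (he : G.IsUmbrellaOrdering e)
    (he' : G.IsUmbrellaOrdering e') (hconn : G.Connected) [NeZero n] :
    G.closedNeighborSet (e 0) = G.closedNeighborSet (e' 0) ∨
      G.closedNeighborSet (e 0) = G.closedNeighborSet (e' (Fin.rev 0)) := by
  -- Otherwise `e 0` has non-twin neighbours `e' kx` and `e' kw.rev` on either side of it in `e'`.
  -- Their closed neighbourhoods strictly contain that of `e 0`; in `e`, where `e 0` comes first,
  -- one of them sees the extra neighbour (`s` or `s'`) of the other, and in `e'` that edge passes
  -- over `e 0`.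
  by_contra! h
  obtain ⟨h0, hlast⟩ := h
  obtain ⟨p, hp⟩ := e'.surjective (e 0)
  obtain ⟨kx, hkx, hx, hxne⟩ := he'.exists_lt_of_closedNeighborSet_ne hconn (i := p)
    (by rwa [hp, ne_comm])
  obtain ⟨kw, hkw, hw, hwne⟩ := he'.reverse.exists_lt_of_closedNeighborSet_ne hconn (i := p.rev)
    (by simpa [hp, ne_comm] using hlast)
  simp only [Equiv.trans_apply, Fin.revPerm_apply, Fin.rev_rev] at hw hwne
  rw [hp] at hx hxne hw hwne
  obtain ⟨s, hsx, hsu⟩ := exists_of_ssubset ((he.closedNeighborSet_first_subset hx).ssubset_of_ne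
    (Ne.symm hxne))
  obtain ⟨s', hs'w, hs'u⟩ := exists_of_ssubset ((he.closedNeighborSet_first_subset hw).ssubset_of_ne
    (Ne.symm hwne))
  have hsandwich {v : V} (hvx : v ∈ G.closedNeighborSet (e' kx))
      (hvw : v ∈ G.closedNeighborSet (e' kw.rev)) : v ∈ G.closedNeighborSet (e 0) :=
    hp ▸ he'.mem_closedNeighborSet_of_le_of_le hkx.le (Fin.lt_rev_iff.1 hkw).le hvx hvw
  rcases he.mem_or_mem_of_notMem_first hx hw hsu hs'u hsx hs'w with h | h
  · exact hsu (hsandwich hsx h)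
  · exact hs'u (hsandwich h hs'w)

lemma closedNeighborSet_eq_of_symm_apply_le (he' : G.IsUmbrellaOrdering e') {i : Fin n}
    (IH : ∀ j < i, G.closedNeighborSet (e j) = G.closedNeighborSet (e' j))
    (hq : e'.symm (e i) ≤ i) : G.closedNeighborSet (e i) = G.closedNeighborSet (e' i) := by
  -- Counting shows that `e'` places some twin of `e i` at a position `≥ i`, and twin classes are
  -- intervals of positions.
  obtain ⟨j, hij, hj⟩ := e.exists_ge_apply_mem_of_forall_lt e'
    (C := {v | G.closedNeighborSet v = G.closedNeighborSet (e i)}) (fun j hj => by simp [IH j hj])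
    rfl
  have := he'.closedNeighborSet_eq_of_le_of_le hq hij (by rw [e'.apply_symm_apply]; exact hj.symm)
  simpa using this.symm

lemma closedNeighborSet_subset_of_le_symm_apply (he : G.IsUmbrellaOrdering e)
    (he' : G.IsUmbrellaOrdering e')
    {i : Fin n} (IH : ∀ j < i, G.closedNeighborSet (e j) = G.closedNeighborSet (e' j))
    (hq : i ≤ e'.symm (e i)) (hp : i ≤ e.symm (e' i)) (hi : e' i ∈ G.closedNeighborSet (e i)) :
    G.closedNeighborSet (e i) ⊆ G.closedNeighborSet (e' i) := by
  intro t ht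
  obtain ⟨k, rfl⟩ := e.surjective t
  rcases lt_or_ge k i with hk | hk
  · have h1 : e' (e'.symm (e i)) ∈ G.closedNeighborSet (e' k) := by
      rw [e'.apply_symm_apply, ← IH k hk]
      exact mem_closedNeighborSet_comm.1 ht
    exact mem_closedNeighborSet_comm.1
      (IH k hk ▸ he'.mem_closedNeighborSet_of_mem le_rfl hk.le hq h1)
  · have h2 : e (e.symm (e' i)) ∈ G.closedNeighborSet (e i) := by rwa [e.apply_symm_apply]
    simpa using he.mem_closedNeighborSet_of_le_of_mem hp hk h2 ht

lemma closedNeighborSet_eq_of_forall_lt (he : G.IsUmbrellaOrdering e)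
    (he' : G.IsUmbrellaOrdering e') (hconn : G.Connected) {i : Fin n} (hi : (i : ℕ) ≠ 0)
    (IH : ∀ j < i, G.closedNeighborSet (e j) = G.closedNeighborSet (e' j)) :
    G.closedNeighborSet (e i) = G.closedNeighborSet (e' i) := by
  rcases le_or_gt (e'.symm (e i)) i with hq | hq
  · exact closedNeighborSet_eq_of_symm_apply_le he' IH hq
  rcases le_or_gt (e.symm (e' i)) i with hp | hp
  · exact (closedNeighborSet_eq_of_symm_apply_le he (fun j hj => (IH j hj).symm) hp).symm
  obtain ⟨h, hh⟩ : ∃ h : Fin n, (h : ℕ) + 1 = i := ⟨⟨i - 1, by omega⟩, by simp; omega⟩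
  have hhi : h < i := Fin.lt_def.2 (by omega)
  have hi' : e' i ∈ G.closedNeighborSet (e i) := by
    have h1 : e (e.symm (e' i)) ∈ G.closedNeighborSet (e h) := by
      rw [e.apply_symm_apply, IH h hhi]
      exact Or.inr (he'.adj_of_val_add_one_eq hconn hh)
    simpa using he.mem_closedNeighborSet_of_mem hhi.le hp.le le_rfl h1
  exact (closedNeighborSet_subset_of_le_symm_apply he he' IH hq.le hp.le hi').antisymm
    (closedNeighborSet_subset_of_le_symm_apply he' he (fun j hj => (IH j hj).symm) hp.le hq.le
      (mem_closedNeighborSet_comm.1 hi'))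

lemma closedNeighborSet_eq_of_closedNeighborSet_zero_eq (he : G.IsUmbrellaOrdering e)
    (he' : G.IsUmbrellaOrdering e') (hconn : G.Connected) [NeZero n]
    (h0 : G.closedNeighborSet (e 0) = G.closedNeighborSet (e' 0)) (i : Fin n) :
    G.closedNeighborSet (e i) = G.closedNeighborSet (e' i) := by
  induction i using WellFoundedLT.induction with
  | ind i IH =>
    rcases eq_or_ne (i : ℕ) 0 with hi | hi
    · rwa [show i = 0 from Fin.ext hi]
    · exact he.closedNeighborSet_eq_of_forall_lt he' hconn hi IH

theorem adj_iff_or_adj_iff_rev (he : G.IsUmbrellaOrdering e) (he' : G.IsUmbrellaOrdering e')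
    (hconn : G.Connected) :
    (∀ i j, G.Adj (e i) (e j) ↔ G.Adj (e' i) (e' j)) ∨
      (∀ i j, G.Adj (e i) (e j) ↔ G.Adj (e' i.rev) (e' j.rev)) := by
  rcases n.eq_zero_or_pos with rfl | hn
  · exact .inl fun i => i.elim0
  have : NeZero n := ⟨hn.ne'⟩
  rcases he.closedNeighborSet_first_eq_or_eq_last he' hconn with h | h
  · exact .inl (adj_iff_adj_of_forall_closedNeighborSet_eq e.injective e'.injective
      (he.closedNeighborSet_eq_of_closedNeighborSet_zero_eq he' hconn h))
  · exact .inr (adj_iff_adj_of_forall_closedNeighborSet_eq e.injective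
      (Fin.revPerm.trans e').injective
      (he.closedNeighborSet_eq_of_closedNeighborSet_zero_eq he'.reverse hconn h))

end IsUmbrellaOrdering

structure CanonicalRep (G : SimpleGraph V) (n : ℕ) where
  e : Fin n ≃ V
  a : Fin n → ℝ
  b : Fin n → ℝ
  a_lt_b : ∀ i, a i < b i
  strictMono_a : StrictMono a
  strictMono_b : StrictMono b
  a_ne_b : ∀ i j, a i ≠ b j
  adj_iff : ∀ ⦃i j⦄, i < j → (G.Adj (e i) (e j) ↔ a j < b i)

namespace CanonicalRep

def ofIcc (e : Fin n ≃ V) (a b : Fin n → ℝ) (hab : ∀ i, a i ≤ b i) (ha : StrictMono a)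
    (hb : StrictMono b) (hne : ∀ i j, a i ≠ b j)
    (hAdj : ∀ i j, i ≠ j → (G.Adj (e i) (e j) ↔ (Icc (a i) (b i) ∩ Icc (a j) (b j)).Nonempty)) :
    G.CanonicalRep n where
  e := e
  a := a
  b := b
  a_lt_b i := (hab i).lt_of_ne (hne i i)
  strictMono_a := ha
  strictMono_b := hb
  a_ne_b := hne
  adj_iff i j hij := by
    rw [hAdj i j hij.ne, Icc_inter_Icc, nonempty_Icc, sup_of_le_right (ha hij).le,
      inf_of_le_left (hb hij).le]
    exact (hne j i).le_iff_lt

variable (R R' : G.CanonicalRep n)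

def reverse : G.CanonicalRep n where
  e := Fin.revPerm.trans R.e
  a i := -R.b i.rev
  b i := -R.a i.rev
  a_lt_b i := neg_lt_neg (R.a_lt_b i.rev)
  strictMono_a _ _ hij := neg_lt_neg (R.strictMono_b (Fin.rev_lt_rev.2 hij))
  strictMono_b _ _ hij := neg_lt_neg (R.strictMono_a (Fin.rev_lt_rev.2 hij))
  a_ne_b i j h := R.a_ne_b j.rev i.rev (neg_injective h).symm
  adj_iff i j hij := by
    rw [Equiv.trans_apply, Equiv.trans_apply, Fin.revPerm_apply, Fin.revPerm_apply, G.adj_comm,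
      R.adj_iff (Fin.rev_lt_rev.2 hij), neg_lt_neg_iff]

lemma isUmbrellaOrdering : G.IsUmbrellaOrdering R.e := by
  intro s i j t hsi hij hjt hst
  rw [R.adj_iff (hsi.trans_lt (hij.trans_le hjt))] at hst
  rw [R.adj_iff hij]
  calc R.a j ≤ R.a t := R.strictMono_a.monotone hjt
    _ < R.b s := hst
    _ ≤ R.b i := R.strictMono_b.monotone hsi

lemma a_lt_b_iff (i j : Fin n) : R.a j < R.b i ↔ j ≤ i ∨ G.Adj (R.e i) (R.e j) := by
  rcases le_or_gt j i with hji | hij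
  · exact iff_of_true ((R.strictMono_a.monotone hji).trans_lt (R.a_lt_b i)) (.inl hji)
  · rw [R.adj_iff hij]
    simp [hij.not_ge]

lemma b_lt_a_iff (i j : Fin n) : R.b j < R.a i ↔ ¬R.a i < R.b j := by
  rw [lt_iff_not_ge, (R.a_ne_b i j).le_iff_lt]

def endpoint : Fin n ⊕ Fin n → ℝ := Sum.elim R.a R.b

lemma endpoint_injective : Injective R.endpoint :=
  R.strictMono_a.injective.sumElim R.strictMono_b.injective R.a_ne_b

lemma range_endpoint : range R.endpoint = range R.a ∪ range R.b := Sum.elim_range _ _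

variable {R R'}

lemma endpoint_lt_endpoint_iff (hadj : ∀ i j, G.Adj (R.e i) (R.e j) ↔ G.Adj (R'.e i) (R'.e j)) :
    ∀ x y, R.endpoint x < R.endpoint y ↔ R'.endpoint x < R'.endpoint y
  | .inl i, .inl j => by simp [endpoint, R.strictMono_a.lt_iff_lt, R'.strictMono_a.lt_iff_lt]
  | .inr i, .inr j => by simp [endpoint, R.strictMono_b.lt_iff_lt, R'.strictMono_b.lt_iff_lt]
  | .inl j, .inr i => by simp only [endpoint, Sum.elim_inl, Sum.elim_inr, a_lt_b_iff, hadj]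
  | .inr j, .inl i => by
    simp only [endpoint, Sum.elim_inl, Sum.elim_inr, b_lt_a_iff, a_lt_b_iff, hadj]

lemma eq_of_isCanonSeq (hadj : ∀ i j, G.Adj (R.e i) (R.e j) ↔ G.Adj (R'.e i) (R'.e j))
    {S S' : Fin (2 * n) → Fin n} (hS : IsCanonSeq R.a R.b S) (hS' : IsCanonSeq R'.a R'.b S')
    (k : Fin (2 * n)) : S' k = S k := by
  obtain ⟨val, hval, hr, hpt⟩ := hS
  obtain ⟨val', hval', hr', hpt'⟩ := hS'
  have key {x x'} (hx : R.endpoint x = val k) (hx' : R'.endpoint x' = val' k) : x' = x :=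
    (eq_of_apply_eq_of_lt_iff_lt R.endpoint_injective R'.endpoint_injective
      (endpoint_lt_endpoint_iff hadj) hval hval' (hr.trans R.range_endpoint.symm)
      (hr'.trans R'.range_endpoint.symm) hx hx').symm
  rcases hpt k with h | h <;> rcases hpt' k with h' | h'
  · simpa using key (x := .inl (S k)) (x' := .inl (S' k)) h h'
  · simpa using key (x := .inl (S k)) (x' := .inr (S' k)) h h'
  · simpa using key (x := .inr (S k)) (x' := .inl (S' k)) h h'
  · simpa using key (x := .inr (S k)) (x' := .inr (S' k)) h h'

end CanonicalRep

end SimpleGraph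

lemma IsCanonSeq.reverse {n : ℕ} {a b : Fin n → ℝ} {S : Fin (2 * n) → Fin n}
    (h : IsCanonSeq a b S) :
    IsCanonSeq (fun i => -b i.rev) (fun i => -a i.rev) (fun k => (S k.rev).rev) := by
  obtain ⟨val, hval, hr, hpt⟩ := h
  have hrange {m : ℕ} (f : Fin m → ℝ) : range (fun k : Fin m => -f k.rev) = -range f := by
    change range ((Neg.neg ∘ f) ∘ Fin.rev) = _
    rw [Fin.rev_surjective.range_comp, range_comp, image_neg_eq_neg]
  refine ⟨fun k : Fin (2 * n) => -val k.rev,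
    fun k l hkl => neg_lt_neg (hval (Fin.rev_lt_rev.2 hkl)), ?_, fun k => ?_⟩
  · rw [hrange, hrange, hrange, hr, union_neg, union_comm]
  · simpa using (hpt k.rev).symm

theorem stmt3_general {V : Type*} {n : ℕ} (G : SimpleGraph V)
    (hconn : G.Connected)
    (e : Fin n ≃ V) (a b : Fin n → ℝ)
    (hab : ∀ i, a i ≤ b i) (ha : StrictMono a) (hb : StrictMono b)
    (hne : ∀ i j : Fin n, a i ≠ b j)
    (hAdj : ∀ i j : Fin n, i ≠ j →
      (G.Adj (e i) (e j) ↔ (Icc (a i) (b i) ∩ Icc (a j) (b j)).Nonempty))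
    (e' : Fin n ≃ V) (a' b' : Fin n → ℝ)
    (hab' : ∀ i, a' i ≤ b' i) (ha' : StrictMono a') (hb' : StrictMono b')
    (hne' : ∀ i j : Fin n, a' i ≠ b' j)
    (hAdj' : ∀ i j : Fin n, i ≠ j →
      (G.Adj (e' i) (e' j) ↔ (Icc (a' i) (b' i) ∩ Icc (a' j) (b' j)).Nonempty))
    (S S' : Fin (2 * n) → Fin n)
    (hS : IsCanonSeq a b S) (hS' : IsCanonSeq a' b' S') :
    (∀ k, S' k = S k) ∨ (∀ k, S' k = (S k.rev).rev) := by
  let R := SimpleGraph.CanonicalRep.ofIcc e a b hab ha hb hne hAdj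
  let R' := SimpleGraph.CanonicalRep.ofIcc e' a' b' hab' ha' hb' hne' hAdj'
  rcases R.isUmbrellaOrdering.adj_iff_or_adj_iff_rev R'.isUmbrellaOrdering hconn with h | h
  · exact .inl (R.eq_of_isCanonSeq h hS hS')
  · refine .inr fun k => ?_
    simpa using congrArg Fin.rev (R.eq_of_isCanonSeq (R' := R'.reverse) h hS hS'.reverse k.rev)

/-- for a connected graph `G` admitting a canonical representation, the
canonical sequence is unique up to reversal: any two canonical representations
(each given by an enumeration and intervals) have canonical sequences `S`, `S'`
with either `S' = S` or `S' k = (S k.rev).rev` for all `k`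
(1-based: `S'(k) = n + 1 − S(2n + 1 − k)`). -/
theorem stmt3 {V : Type*} [Fintype V] {n : ℕ} (G : SimpleGraph V)
    (hconn : G.Connected)
    (e : Fin n ≃ V) (a b : Fin n → ℝ)
    (hab : ∀ i, a i ≤ b i) (ha : StrictMono a) (hb : StrictMono b)
    (hne : ∀ i j : Fin n, a i ≠ b j)
    (hAdj : ∀ i j : Fin n, i ≠ j →
      (G.Adj (e i) (e j) ↔ (Icc (a i) (b i) ∩ Icc (a j) (b j)).Nonempty))
    (e' : Fin n ≃ V) (a' b' : Fin n → ℝ)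
    (hab' : ∀ i, a' i ≤ b' i) (ha' : StrictMono a') (hb' : StrictMono b')
    (hne' : ∀ i j : Fin n, a' i ≠ b' j)
    (hAdj' : ∀ i j : Fin n, i ≠ j →
      (G.Adj (e' i) (e' j) ↔ (Icc (a' i) (b' i) ∩ Icc (a' j) (b' j)).Nonempty))
    (S S' : Fin (2 * n) → Fin n)
    (hS : IsCanonSeq a b S) (hS' : IsCanonSeq a' b' S') :
    (∀ k, S' k = S k) ∨ (∀ k, S' k = (S k.rev).rev) :=
  stmt3_general G hconn e a b hab ha hb hne hAdj e' a' b' hab' ha' hb' hne' hAdj' S S' hS hS'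
end

section
/- Let G be a finite simple graph with an enumeration v_1, …, v_n of its vertices such that for all indices i ≤ k ≤ j, if v_i is adjacent to v_j then v_k ∈ N[v_i] and v_k ∈ N[v_j] (the closed neighborhoods are consecutive in the enumeration). For each i set U(i) = max{ j : j ≥ i and v_j ∈ N[v_i] }, a_i = i and b_i = U(i) + 1 − 1/i. Then: (1) for all i ≠ j, v_i is adjacent to v_j if and only if [a_i, b_i] ∩ [a_j, b_j] ≠ ∅; and (2) both sequences (a_i) and (b_i) are strictly increasing, so no interval [a_i, b_i] properly contains another. Hence these intervals form a proper interval representation of G. -/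
open Set

/-- if an enumeration `e` of the vertices of `G` satisfies the
closed-neighborhood (consecutiveness) condition, then setting
`U i = max { j : j ≥ i and v_j ∈ N[v_i] }`, `a i = i` and `b i = U(i) + 1 − 1/i`
(in 1-based indexing; here indices are 0-based so `a i = i + 1` and
`b i = (U i + 1) + 1 − 1/(i+1)`) yields a proper interval representation of `G`:
adjacency coincides with interval intersection, both endpoint sequences are strictly
increasing, and no interval properly contains another. -/
theorem stmt4 {V : Type*} [Fintype V] {n : ℕ} (G : SimpleGraph V) (e : Fin n ≃ V)
    (hcons : ∀ i k j : Fin n, i ≤ k → k ≤ j → G.Adj (e i) (e j) →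
      (e k = e i ∨ G.Adj (e i) (e k)) ∧ (e k = e j ∨ G.Adj (e j) (e k)))
    (U : Fin n → Fin n)
    (hU : ∀ i, IsGreatest {j | i ≤ j ∧ (e j = e i ∨ G.Adj (e i) (e j))} (U i))
    (a b : Fin n → ℝ)
    (ha : ∀ i, a i = (i : ℕ) + 1)
    (hb : ∀ i, b i = ((U i : ℕ) + 2 : ℝ) - 1 / ((i : ℕ) + 1)) :
    (∀ i j : Fin n, i ≠ j →
      (G.Adj (e i) (e j) ↔ (Icc (a i) (b i) ∩ Icc (a j) (b j)).Nonempty)) ∧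
    StrictMono a ∧ StrictMono b ∧
    (∀ i j : Fin n, i ≠ j → ¬ Icc (a i) (b i) ⊂ Icc (a j) (b j)) := by
  have hinj : Function.Injective e := e.injective
  have hUle : ∀ i, i ≤ U i := fun i => (hU i).1.1
  -- if i < U i then e i is adjacent to e (U i)
  have hadjEU : ∀ i : Fin n, i < U i → G.Adj (e i) (e (U i)) := by
    intro i hiu
    rcases (hU i).1.2 with h | h
    · exact absurd (hinj h) hiu.ne'
    · exact h
  -- for i < j, adjacency iff j ≤ U i
  have hadjU : ∀ i j : Fin n, i < j → (G.Adj (e i) (e j) ↔ j ≤ U i) := by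
    intro i j hij
    constructor
    · intro hadj; exact (hU i).2 ⟨hij.le, Or.inr hadj⟩
    · intro hji
      have hadj := hadjEU i (lt_of_lt_of_le hij hji)
      rcases (hcons i j (U i) hij.le hji hadj).1 with h | h
      · exact absurd (hinj h) hij.ne'
      · exact h
  have hUmono : Monotone U := by
    intro i j hij
    rcases eq_or_lt_of_le hij with rfl | hij
    · exact le_rfl
    by_cases h : U i ≤ j
    · exact h.trans (hUle j)
    push_neg at h
    have hadj := hadjEU i (hij.trans h)
    have hadj' : G.Adj (e j) (e (U i)) := by
      rcases (hcons i j (U i) hij.le h.le hadj).2 with hh | hh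
      · exact absurd (hinj hh) h.ne
      · exact hh.symm
    exact (hU j).2 ⟨h.le, Or.inr hadj'⟩
  -- basic numeric facts
  have hpos : ∀ i : Fin n, (0:ℝ) < (i : ℕ) + 1 := by
    intro i; positivity
  have hdle : ∀ i : Fin n, 1 / ((i : ℕ) + 1 : ℝ) ≤ 1 := by
    intro i
    rw [div_le_one (hpos i)]
    have : (0:ℝ) ≤ (i : ℕ) := Nat.cast_nonneg _
    linarith
  have hab : ∀ i, a i ≤ b i := by
    intro i
    rw [ha, hb]
    have h1 : ((i:ℕ):ℝ) ≤ ((U i : ℕ):ℝ) := by exact_mod_cast hUle i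
    have := hdle i
    linarith
  have hamono : StrictMono a := by
    intro i j hij
    rw [ha, ha]
    have : (i:ℕ) < (j:ℕ) := hij
    exact_mod_cast Nat.succ_lt_succ this
  have hbmono : StrictMono b := by
    intro i j hij
    rw [hb, hb]
    have hU' : ((U i : ℕ):ℝ) ≤ ((U j : ℕ):ℝ) := by exact_mod_cast hUmono hij.le
    have hij' : ((i:ℕ):ℝ) < ((j:ℕ):ℝ) := by exact_mod_cast hij
    have h1 : 1 / (((j:ℕ):ℝ) + 1) < 1 / (((i:ℕ):ℝ) + 1) :=
      one_div_lt_one_div_of_lt (hpos i) (by linarith)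
    linarith
  -- key: interval intersection characterization for i < j
  have key : ∀ i j : Fin n, i < j →
      (G.Adj (e i) (e j) ↔ (Icc (a i) (b i) ∩ Icc (a j) (b j)).Nonempty) := by
    intro i j hij
    rw [hadjU i j hij, Icc_inter_Icc, nonempty_Icc,
      max_eq_right (hamono hij).le, min_eq_left (hbmono hij).le, ha, hb]
    constructor
    · intro h
      have h' : ((j:ℕ):ℝ) ≤ ((U i : ℕ):ℝ) := by exact_mod_cast (Fin.le_def.mp h)
      have := hdle i
      linarith
    · intro h
      have h2 : ((j:ℕ):ℝ) < ((U i : ℕ):ℝ) + 1 := by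
        have := hpos i
        have hd : 0 < 1 / (((i:ℕ):ℝ) + 1) := by positivity
        linarith
      have h3 : (j:ℕ) ≤ (U i : ℕ) := by exact_mod_cast Nat.lt_succ_iff.mp (by exact_mod_cast h2)
      exact Fin.le_def.mpr h3
  refine ⟨?_, hamono, hbmono, ?_⟩
  · intro i j hij
    rcases lt_or_gt_of_ne hij with h | h
    · exact key i j h
    · rw [G.adj_comm, Set.inter_comm]
      exact key j i h
  · intro i j hij hss
    have hsub := (Icc_subset_Icc_iff (hab i)).mp hss.subset
    rcases lt_or_gt_of_ne hij with h | h
    · exact absurd hsub.1 (not_le.mpr (hamono h))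
    · exact absurd hsub.2 (not_le.mpr (hbmono h))
end

section
/- Let [ℓ_1, r_1], …, [ℓ_p, r_p] be closed real intervals (ℓ_i ≤ r_i) with ℓ_1 < ℓ_2 < ⋯ < ℓ_p and r_1 < r_2 < ⋯ < r_p, and let J be a closed real interval. Call an index i hit if ℓ_i ∈ J or r_i ∈ J. Then there do not exist indices i_1 < i_2 < i_3 < i_4 < i_5 such that i_1, i_3, i_5 are hit and i_2, i_4 are not hit. Consequently, if G = (P, N, E) is a PTPIG whose representation restricts to a canonical representation of G_P with probe enumeration u_1, …, u_p, then for every nonprobe w ∈ N the set of indices i with u_i adjacent to w consists of at most two maximal runs of consecutive integers (each column of the probe–nonprobe adjacency matrix has at most two consecutive stretches of 1's). -/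
open Set

lemma aux5 (p : ℕ) (ℓ r : Fin p → ℝ) (hlr : ∀ i, ℓ i ≤ r i)
    (hℓ : StrictMono ℓ) (hr : StrictMono r) (c d : ℝ) :
    ¬ ∃ i1 i2 i3 i4 i5 : Fin p, i1 < i2 ∧ i2 < i3 ∧ i3 < i4 ∧ i4 < i5 ∧
        (ℓ i1 ∈ Icc c d ∨ r i1 ∈ Icc c d) ∧
        ¬ (ℓ i2 ∈ Icc c d ∨ r i2 ∈ Icc c d) ∧
        (ℓ i3 ∈ Icc c d ∨ r i3 ∈ Icc c d) ∧
        ¬ (ℓ i4 ∈ Icc c d ∨ r i4 ∈ Icc c d) ∧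
        (ℓ i5 ∈ Icc c d ∨ r i5 ∈ Icc c d) := by
  rintro ⟨i1, i2, i3, i4, i5, h12, h23, h34, h45, h1, h2, h3, h4, h5⟩
  rcases h3 with ⟨hc3, hd3⟩ | ⟨hc3, hd3⟩
  · -- c ≤ ℓ i3 ≤ d : then ℓ i4 > d, hence i5 entirely beyond d
    have hl4 : d < ℓ i4 := by
      by_contra h
      push_neg at h
      exact h4 (Or.inl ⟨le_trans hc3 (hℓ h34).le, h⟩)
    have hl5 : d < ℓ i5 := lt_trans hl4 (hℓ h45)
    rcases h5 with ⟨_, hd5⟩ | ⟨hc5, hd5⟩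
    · linarith
    · linarith [hlr i5]
  · -- c ≤ r i3 ≤ d : then r i2 < c, hence i1 entirely before c
    have hr2 : r i2 < c := by
      by_contra h
      push_neg at h
      exact h2 (Or.inr ⟨h, le_trans (hr h23).le hd3⟩)
    have hr1 : r i1 < c := lt_trans (hr h12) hr2
    rcases h1 with ⟨hc1, _⟩ | ⟨hc1, _⟩
    · linarith [hlr i1]
    · linarith

/-- (1) given intervals `[ℓ i, r i]` with strictly increasing left and
right endpoints and a closed interval `J = [c, d]`, there is no pattern
`i₁ < i₂ < i₃ < i₄ < i₅` with `i₁, i₃, i₅` hit by `J` and `i₂, i₄` not hit;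
(2) consequently, in a PTPIG whose representation restricts to a canonical
representation of `G_P`, for every nonprobe `w` the neighbors of `w` among the probes
form at most two consecutive stretches (no `1,0,1,0,1` pattern). -/
theorem stmt5 :
    (∀ (p : ℕ) (ℓ r : Fin p → ℝ), (∀ i, ℓ i ≤ r i) →
      StrictMono ℓ → StrictMono r → ∀ c d : ℝ,
      ¬ ∃ i1 i2 i3 i4 i5 : Fin p, i1 < i2 ∧ i2 < i3 ∧ i3 < i4 ∧ i4 < i5 ∧
          (ℓ i1 ∈ Icc c d ∨ r i1 ∈ Icc c d) ∧
          ¬ (ℓ i2 ∈ Icc c d ∨ r i2 ∈ Icc c d) ∧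
          (ℓ i3 ∈ Icc c d ∨ r i3 ∈ Icc c d) ∧
          ¬ (ℓ i4 ∈ Icc c d ∨ r i4 ∈ Icc c d) ∧
          (ℓ i5 ∈ Icc c d ∨ r i5 ∈ Icc c d))
    ∧
    (∀ (V : Type) (G : SimpleGraph V) (P N : Set V) (p : ℕ) (u : Fin p → V)
        (ℓ r : V → ℝ),
      P = Nᶜ →
      Function.Injective u → Set.range u = P →
      (∀ w ∈ N, ∀ w' ∈ N, ¬ G.Adj w w') →
      (∀ x, ℓ x ≤ r x) →
      (∀ x ∈ P, ∀ y ∈ P, x ≠ y →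
        (G.Adj x y ↔ (Icc (ℓ x) (r x) ∩ Icc (ℓ y) (r y)).Nonempty)) →
      StrictMono (fun i => ℓ (u i)) → StrictMono (fun i => r (u i)) →
      (∀ i j : Fin p, ℓ (u i) ≠ r (u j)) →
      (∀ x ∈ P, ∀ w ∈ N,
        (G.Adj x w ↔ ℓ x ∈ Icc (ℓ w) (r w) ∨ r x ∈ Icc (ℓ w) (r w))) →
      ∀ w ∈ N,
        ¬ ∃ i1 i2 i3 i4 i5 : Fin p, i1 < i2 ∧ i2 < i3 ∧ i3 < i4 ∧ i4 < i5 ∧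
            G.Adj (u i1) w ∧ ¬ G.Adj (u i2) w ∧ G.Adj (u i3) w ∧
            ¬ G.Adj (u i4) w ∧ G.Adj (u i5) w) := by
  constructor
  · exact aux5
  · intro V G P N p u ℓ r hPN hinj hrange hNind hlr hPP hℓ hr hne hPNadj w hw
    intro ⟨i1, i2, i3, i4, i5, h12, h23, h34, h45, a1, a2, a3, a4, a5⟩
    have hP : ∀ i : Fin p, u i ∈ P := fun i => hrange ▸ mem_range_self i
    have key : ∀ i : Fin p,
        (G.Adj (u i) w ↔ ℓ (u i) ∈ Icc (ℓ w) (r w) ∨ r (u i) ∈ Icc (ℓ w) (r w)) :=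
      fun i => hPNadj (u i) (hP i) w hw
    exact aux5 p (fun i => ℓ (u i)) (fun i => r (u i)) (fun i => hlr (u i))
      hℓ hr (ℓ w) (r w)
      ⟨i1, i2, i3, i4, i5, h12, h23, h34, h45,
        (key i1).mp a1, fun h => a2 ((key i2).mpr h),
        (key i3).mp a3, fun h => a4 ((key i4).mpr h), (key i5).mp a5⟩
end

section
/- Let G = (V, E) be a finite simple graph with a partition V = P ⊔ N such that N is an independent set, and suppose there is an assignment of closed real intervals I_x = [a_x, b_x] to all vertices x ∈ V such that no interval properly contains another (I_x ⊊ I_y for no pair x ≠ y), and for any two distinct vertices at least one of which lies in P, they are adjacent if and only if their intervals intersect (i.e., G is a probe proper interval graph with probes P and nonprobes N). Then for every p ∈ P and w ∈ N, p and w are adjacent if and only if a_p ∈ I_w or b_p ∈ I_w; in particular, the same family of intervals is a PTPIG representation, so G is a proper tagged probe interval graph with probes P and nonprobes N. Hence every probe proper interval graph is a proper tagged probe interval graph. -/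
open Set

/-- if `G` is a probe proper interval graph with probes `P` and
nonprobes `N` (with representation `[a x, b x]`), then for every probe `p` and
nonprobe `w`, `p` and `w` are adjacent iff `a p ∈ I_w` or `b p ∈ I_w`; in
particular the same intervals form a PTPIG representation, so `G` is a proper
tagged probe interval graph with probes `P` and nonprobes `N`. -/
theorem stmt12 {V : Type*} [Fintype V] (G : SimpleGraph V) (P N : Set V)
    (hPN : P = Nᶜ)
    (hind : ∀ w ∈ N, ∀ w' ∈ N, ¬ G.Adj w w')
    (a b : V → ℝ) (hab : ∀ x, a x ≤ b x)
    (hproper : ∀ x y : V, x ≠ y → ¬ Icc (a x) (b x) ⊂ Icc (a y) (b y))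
    (hadj : ∀ x y : V, x ≠ y → (x ∈ P ∨ y ∈ P) →
      (G.Adj x y ↔ (Icc (a x) (b x) ∩ Icc (a y) (b y)).Nonempty)) :
    (∀ x ∈ P, ∀ w ∈ N,
      (G.Adj x w ↔ a x ∈ Icc (a w) (b w) ∨ b x ∈ Icc (a w) (b w)))
    ∧
    (∃ ℓ r : V → ℝ,
      (∀ x, ℓ x ≤ r x) ∧
      (∀ x ∈ P, ∀ y ∈ P, x ≠ y →
        (G.Adj x y ↔ (Icc (ℓ x) (r x) ∩ Icc (ℓ y) (r y)).Nonempty)) ∧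
      (∀ x ∈ P, ∀ y ∈ P, x ≠ y → ¬ Icc (ℓ x) (r x) ⊂ Icc (ℓ y) (r y)) ∧
      (∀ x ∈ P, ∀ w ∈ N,
        (G.Adj x w ↔ ℓ x ∈ Icc (ℓ w) (r w) ∨ r x ∈ Icc (ℓ w) (r w)))) := by
  have key : ∀ x ∈ P, ∀ w ∈ N,
      (G.Adj x w ↔ a x ∈ Icc (a w) (b w) ∨ b x ∈ Icc (a w) (b w)) := by
    intro x hx w hw
    have hne : x ≠ w := by
      rintro rfl
      rw [hPN] at hx
      exact hx hw
    rw [hadj x w hne (Or.inl hx)]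
    constructor
    · rintro ⟨t, ht1, ht2⟩
      simp only [mem_Icc] at *
      by_cases h1 : a w ≤ a x
      · exact Or.inl ⟨h1, le_trans ht1.1 ht2.2⟩
      · push_neg at h1
        have hbw : b x ≤ b w := by
          by_contra hc
          push_neg at hc
          exact hproper w x hne.symm ⟨Icc_subset_Icc h1.le hc.le,
            fun hsub => absurd (hsub ⟨le_refl _, hab x⟩).1 (not_le.mpr h1)⟩
        exact Or.inr ⟨le_trans ht2.1 ht1.2, hbw⟩
    · rintro (h | h)
      · exact ⟨a x, ⟨le_refl _, hab x⟩, h⟩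
      · exact ⟨b x, ⟨hab x, le_refl _⟩, h⟩
  refine ⟨key, a, b, hab, fun x hx y _ hne => hadj x y hne (Or.inl hx),
    fun x _ y _ hne => hproper x y hne, key⟩
end

section
/- Let G be the finite simple graph with vertex set {p_1, p_2, p_3, p_4, p_5, p_6, n_1, n_2}, whose edges are: p_1p_2, p_2p_3, p_2p_4, p_3p_4, p_4p_5, p_5p_6 (among the p-vertices), and p_2n_1, p_4n_1, p_5n_1, p_4n_2, p_5n_2, p_6n_2 (between p-vertices and n-vertices); in particular {n_1, n_2} is an independent set. Then G is NOT a proper tagged probe interval graph with probes P = {p_1, …, p_6} and nonprobes N = {n_1, n_2}, even though the induced subgraph on P is a proper interval graph and, in the canonical ordering p_1, …, p_6, the neighbors of each nonprobe form at most two consecutive runs. -/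
open Set

/-- The graph of STATEMENT 13 on vertices `0,…,5 = p₁,…,p₆`, `6 = n₁`, `7 = n₂`,
with edges p₁p₂, p₂p₃, p₂p₄, p₃p₄, p₄p₅, p₅p₆, p₂n₁, p₄n₁, p₅n₁, p₄n₂, p₅n₂, p₆n₂. -/
def G13 : SimpleGraph (Fin 8) :=
  SimpleGraph.fromRel (fun x y =>
    (x, y) ∈ ([(0, 1), (1, 2), (1, 3), (2, 3), (3, 4), (4, 5),
               (1, 6), (3, 6), (4, 6), (3, 7), (4, 7), (5, 7)] : List (Fin 8 × Fin 8)))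

/-- The probes `p₁,…,p₆`. -/
def P13 : Set (Fin 8) := {x | (x : ℕ) < 6}

/-- The nonprobes `n₁, n₂`. -/
def N13 : Set (Fin 8) := {x | 6 ≤ (x : ℕ)}

/-- The inclusion of the probe indices into the vertex set. -/
def e13 : Fin 6 → Fin 8 := Fin.castLE (by norm_num)

instance : DecidableRel G13.Adj := fun x y => by
  unfold G13; rw [SimpleGraph.fromRel_adj]; infer_instance

lemma inter_nonempty_iff13 (a b c d : ℝ) (hab : a ≤ b) (hcd : c ≤ d) :
    (Icc a b ∩ Icc c d).Nonempty ↔ (c ≤ b ∧ a ≤ d) := by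
  constructor
  · rintro ⟨x, ⟨h1, h2⟩, h3, h4⟩; constructor <;> linarith
  · rintro ⟨h1, h2⟩
    exact ⟨max a c, ⟨le_max_left _ _, max_le hab h1⟩, ⟨le_max_right _ _, max_le h2 hcd⟩⟩

lemma not_ssubset_unit13 (x y : ℝ) : ¬ Icc x (x+1) ⊂ Icc y (y+1) := by
  intro h
  have h1 := h.subset (left_mem_Icc.mpr (by linarith))
  have h2 := h.subset (right_mem_Icc.mpr (by linarith))
  rw [mem_Icc] at h1 h2
  have : x = y := by linarith
  subst this
  exact (lt_irrefl _ h)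

lemma ssubset_icc13 (a b c d : ℝ) (hcd : c ≤ d) (h1 : c < a) (h2 : b ≤ d) :
    Icc a b ⊂ Icc c d := by
  constructor
  · exact Icc_subset_Icc h1.le h2
  · intro hsub
    have := hsub (left_mem_Icc.mpr hcd)
    rw [mem_Icc] at this
    linarith [this.1]

lemma mono_of_not_ssubset13 (a b c d : ℝ) (hcd : c ≤ d)
    (h : ¬ Icc a b ⊂ Icc c d) (hca : c < a) : d < b := by
  by_contra hbd
  push_neg at hbd
  exact h (ssubset_icc13 a b c d hcd hca hbd)

lemma of_inter13 (a b c d : ℝ) (h : (Icc a b ∩ Icc c d).Nonempty) : c ≤ b ∧ a ≤ d := by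
  obtain ⟨x, ⟨h1, h2⟩, h3, h4⟩ := h
  exact ⟨by linarith, by linarith⟩

lemma of_disjoint13 (a b c d : ℝ) (hab : a ≤ b) (hcd : c ≤ d)
    (h : ¬ (Icc a b ∩ Icc c d).Nonempty) : b < c ∨ d < a := by
  by_contra hc
  push_neg at hc
  exact h ((inter_nonempty_iff13 a b c d hab hcd).mpr ⟨hc.1, hc.2⟩)

lemma core13 (l1 r1 l2 r2 l3 r3 l4 r4 l5 r5 L R : ℝ)
    (h5 : l5 ≤ r5)
    (h12a : l2 ≤ r1) (h12b : l1 ≤ r2)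
    (h23a : l2 ≤ r3)
    (h24 : l4 ≤ r2)
    (h45a : l4 ≤ r5) (h45b : l5 ≤ r4)
    (h13 : r1 < l3 ∨ r3 < l1)
    (h14 : r1 < l4 ∨ r4 < l1)
    (h25 : r2 < l5 ∨ r5 < l2)
    (h35 : r3 < l5 ∨ r5 < l3)
    (h34 : l3 ≤ l4)
    (hm32 : r3 < r2 → l3 ≤ l2)
    (hm21 : l2 < l1 → r2 ≤ r1)
    (hA : (L ≤ l2 ∧ l2 ≤ R) ∨ (L ≤ r2 ∧ r2 ≤ R))
    (hC : (L ≤ l5 ∧ l5 ≤ R) ∨ (L ≤ r5 ∧ r5 ≤ R))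
    (hB : ¬(L ≤ r3 ∧ r3 ≤ R)) : False := by
  have h35' : r3 < l5 := by
    rcases h35 with h | h
    · exact h
    · linarith
  have h25' : r2 < l5 := by
    rcases h25 with h | h
    · exact h
    · linarith
  have hR : l5 ≤ R := by rcases hC with ⟨_, h⟩ | ⟨_, h⟩ <;> linarith
  have hL : r3 < L := by
    by_contra h; push_neg at h; exact hB ⟨h, by linarith⟩
  rcases hA with ⟨h1, _⟩ | ⟨h1, _⟩
  · linarith
  · have h32 : l3 ≤ l2 := hm32 (by linarith)
    rcases h13 with h | h
    · linarith
    · have h21 : r2 ≤ r1 := hm21 (by linarith)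
      rcases h14 with h' | h' <;> linarith

noncomputable def aa13 : Fin 6 → ℝ := ![0, 1, 3/2, 2, 3, 4]

/-- the induced subgraph of `G13` on the probes is a proper interval
graph, and in the canonical ordering `p₁, …, p₆` the neighbors of each nonprobe form
at most two consecutive runs (no `1,0,1,0,1` pattern); nevertheless, `G13` is NOT a
proper tagged probe interval graph with probes `P13` and nonprobes `N13`. -/
theorem stmt13 :
    -- the induced subgraph on the probes is a proper interval graph:
    (∃ a b : Fin 6 → ℝ,
      (∀ i, a i ≤ b i) ∧
      (∀ i j : Fin 6, i ≠ j →
        (G13.Adj (e13 i) (e13 j) ↔ (Icc (a i) (b i) ∩ Icc (a j) (b j)).Nonempty)) ∧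
      (∀ i j : Fin 6, i ≠ j → ¬ Icc (a i) (b i) ⊂ Icc (a j) (b j)))
    ∧
    -- in the ordering p₁,…,p₆ each nonprobe's neighbors form at most two runs:
    (∀ w ∈ N13,
      ¬ ∃ i1 i2 i3 i4 i5 : Fin 6, i1 < i2 ∧ i2 < i3 ∧ i3 < i4 ∧ i4 < i5 ∧
        G13.Adj (e13 i1) w ∧ ¬ G13.Adj (e13 i2) w ∧ G13.Adj (e13 i3) w ∧
        ¬ G13.Adj (e13 i4) w ∧ G13.Adj (e13 i5) w)
    ∧
    -- G13 is not a PTPIG with probes P13 and nonprobes N13: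
    ¬ (∃ ℓ r : Fin 8 → ℝ,
      (∀ x, ℓ x ≤ r x) ∧
      (∀ x ∈ P13, ∀ y ∈ P13, x ≠ y →
        (G13.Adj x y ↔ (Icc (ℓ x) (r x) ∩ Icc (ℓ y) (r y)).Nonempty)) ∧
      (∀ x ∈ P13, ∀ y ∈ P13, x ≠ y → ¬ Icc (ℓ x) (r x) ⊂ Icc (ℓ y) (r y)) ∧
      (∀ x ∈ P13, ∀ w ∈ N13,
        (G13.Adj x w ↔ ℓ x ∈ Icc (ℓ w) (r w) ∨ r x ∈ Icc (ℓ w) (r w)))) := by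
  refine ⟨?_, ?_, ?_⟩
  · -- Part 1
    refine ⟨aa13, fun i => aa13 i + 1, fun i => (lt_add_one (aa13 i)).le, ?_,
      fun i j _ => not_ssubset_unit13 _ _⟩
    intro i j hij
    rw [inter_nonempty_iff13 _ _ _ _ ((lt_add_one (aa13 i)).le) ((lt_add_one (aa13 j)).le)]
    fin_cases i <;> fin_cases j <;>
      first
        | (exact absurd rfl hij)
        | (exact iff_of_true (by decide) (by norm_num [aa13]))
        | (exact iff_of_false (by decide) (by norm_num [aa13]))
  · -- Part 2
    intro w hw
    have hw' : 6 ≤ (w : ℕ) := hw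
    clear hw
    revert w hw'
    decide
  · -- Part 3
    rintro ⟨l, r, hlr, hPP, hcont, hPN⟩
    -- membership facts
    have hp : ∀ i : Fin 8, (i : ℕ) < 6 → i ∈ P13 := fun i h => h
    have hn6 : (6 : Fin 8) ∈ N13 := by show 6 ≤ ((6 : Fin 8) : ℕ); decide
    -- adjacency interval facts (vertices 0..5 are p1..p6)
    have adj : ∀ x y : Fin 8, (x : ℕ) < 6 → (y : ℕ) < 6 → x ≠ y → G13.Adj x y →
        l y ≤ r x ∧ l x ≤ r y := by
      intro x y hx hy hxy hadj
      exact of_inter13 _ _ _ _ ((hPP x (hp x hx) y (hp y hy) hxy).mp hadj)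
    have nonadj : ∀ x y : Fin 8, (x : ℕ) < 6 → (y : ℕ) < 6 → x ≠ y → ¬ G13.Adj x y →
        r x < l y ∨ r y < l x := by
      intro x y hx hy hxy hnadj
      refine of_disjoint13 _ _ _ _ (hlr x) (hlr y) ?_
      intro hne
      exact hnadj ((hPP x (hp x hx) y (hp y hy) hxy).mpr hne)
    have mono : ∀ x y : Fin 8, (x : ℕ) < 6 → (y : ℕ) < 6 → x ≠ y →
        l x < l y → r x < r y := by
      intro x y hx hy hxy h
      exact mono_of_not_ssubset13 (l y) (r y) (l x) (r x) (hlr x)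
        (hcont y (hp y hy) x (hp x hx) (Ne.symm hxy)) h
    -- concrete facts
    obtain ⟨h01a, h01b⟩ := adj 0 1 (by decide) (by decide) (by decide) (by decide)
    obtain ⟨h12a, h12b⟩ := adj 1 2 (by decide) (by decide) (by decide) (by decide)
    obtain ⟨h13a, h13b⟩ := adj 1 3 (by decide) (by decide) (by decide) (by decide)
    obtain ⟨h34a, h34b⟩ := adj 3 4 (by decide) (by decide) (by decide) (by decide)
    have h02 := nonadj 0 2 (by decide) (by decide) (by decide) (by decide)
    have h03 := nonadj 0 3 (by decide) (by decide) (by decide) (by decide)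
    have h14 := nonadj 1 4 (by decide) (by decide) (by decide) (by decide)
    have h24 := nonadj 2 4 (by decide) (by decide) (by decide) (by decide)
    have m10 : l 1 < l 0 → r 1 < r 0 := mono 1 0 (by decide) (by decide) (by decide)
    have m01 : l 0 < l 1 → r 0 < r 1 := mono 0 1 (by decide) (by decide) (by decide)
    have m12 : l 1 < l 2 → r 1 < r 2 := mono 1 2 (by decide) (by decide) (by decide)
    have m32 : l 3 < l 2 → r 3 < r 2 := mono 3 2 (by decide) (by decide) (by decide)
    -- nonprobe n1 = vertex 6 facts
    have hn1 := (hPN 1 (hp 1 (by decide)) 6 hn6).mp (by decide)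
    have hn4 := (hPN 4 (hp 4 (by decide)) 6 hn6).mp (by decide)
    have hn2 : ¬ (l 2 ∈ Icc (l 6) (r 6) ∨ r 2 ∈ Icc (l 6) (r 6)) := by
      intro h
      exact absurd ((hPN 2 (hp 2 (by decide)) 6 hn6).mpr h) (by decide)
    simp only [mem_Icc] at hn1 hn4 hn2
    have hn2a : ¬ (l 6 ≤ l 2 ∧ l 2 ≤ r 6) := fun h => hn2 (Or.inl h)
    have hn2b : ¬ (l 6 ≤ r 2 ∧ r 2 ≤ r 6) := fun h => hn2 (Or.inr h)
    rcases le_or_gt (l 2) (l 3) with hwlog | hwlog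
    · exact core13 (l 0) (r 0) (l 1) (r 1) (l 2) (r 2) (l 3) (r 3) (l 4) (r 4) (l 6) (r 6)
        (hlr 4) h01a h01b h12b h13a h34b h34a
        h02 h03 h14 h24 hwlog
        (fun h => by by_contra hc; push_neg at hc; linarith [m12 hc])
        (fun h => (m10 h).le)
        hn1 hn4
        hn2b
    · -- mirrored representation
      have hr32 : r 3 < r 2 := m32 hwlog
      refine core13 (-(r 0)) (-(l 0)) (-(r 1)) (-(l 1)) (-(r 2)) (-(l 2)) (-(r 3)) (-(l 3))
        (-(r 4)) (-(l 4)) (-(r 6)) (-(l 6))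
        (by linarith [hlr 4]) (by linarith) (by linarith) (by linarith) (by linarith)
        (by linarith) (by linarith) ?_ ?_ ?_ ?_ (by linarith)
        (fun h => by linarith [m12 (by linarith : l 1 < l 2)])
        (fun h => by by_contra hc; push_neg at hc; linarith [m10 (by linarith : l 1 < l 0)])
        ?_ ?_ ?_
      · rcases h02 with h | h
        · exact Or.inr (by linarith)
        · exact Or.inl (by linarith)
      · rcases h03 with h | h
        · exact Or.inr (by linarith)
        · exact Or.inl (by linarith)
      · rcases h14 with h | h
        · exact Or.inr (by linarith)
        · exact Or.inl (by linarith)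
      · rcases h24 with h | h
        · exact Or.inr (by linarith)
        · exact Or.inl (by linarith)
      · rcases hn1 with ⟨u, v⟩ | ⟨u, v⟩
        · exact Or.inr ⟨by linarith, by linarith⟩
        · exact Or.inl ⟨by linarith, by linarith⟩
      · rcases hn4 with ⟨u, v⟩ | ⟨u, v⟩
        · exact Or.inr ⟨by linarith, by linarith⟩
        · exact Or.inl ⟨by linarith, by linarith⟩
      · rintro ⟨u, v⟩
        exact hn2a ⟨by linarith, by linarith⟩
end
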